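/- arXiv:2504.21740 — 10 statements merged into one kernel-verified Lean document; each statement's English description precedes it below -/
import Mathlib

section
/- Suppose ρ is irreducible and q is a nonzero G-invariant bilinear form on V. Then q is either symmetric or alternating. -/
/-- If `ρ` is irreducible and `q` is a nonzero `G`-invariant bilinear form on
`V`, then `q` is either symmetric or alternating. -/
theorem invariant_bilinear_form_symm_or_alt
    {G V : Type*} [Group G] [AddCommGroup V] [Module ℂ V]
    [FiniteDimensional ℂ V] [Nontrivial V]
    (ρ : G →* (V ≃ₗ[ℂ] V))
    (hirr : ∀ p : Submodule ℂ V, (∀ g : G, ∀ x ∈ p, ρ g x ∈ p) → p = ⊥ ∨ p = ⊤)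
    (q : V →ₗ[ℂ] V →ₗ[ℂ] ℂ) (hq : q ≠ 0)
    (hinv : ∀ (g : G) (x y : V), q (ρ g x) (ρ g y) = q x y) :
    (∀ x y : V, q x y = q y x) ∨ (∀ x : V, q x x = 0) := by
  classical
  have hcanc : ∀ (g : G) (x : V), ρ g⁻¹ (ρ g x) = x := by
    intro g x
    rw [map_inv]
    exact (ρ g).symm_apply_apply x
  have hkerinv : ∀ g : G, ∀ x ∈ LinearMap.ker q, ρ g x ∈ LinearMap.ker q := by
    intro g x hx
    rw [LinearMap.mem_ker] at hx ⊢
    ext y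
    have h1 := hinv g⁻¹ (ρ g x) y
    rw [hcanc g x] at h1
    simp [← h1, hx]
  have hker : LinearMap.ker q = ⊥ := by
    rcases hirr _ hkerinv with h | h
    · exact h
    · exfalso; apply hq; ext x y
      have hx : x ∈ LinearMap.ker q := h ▸ Submodule.mem_top
      rw [LinearMap.mem_ker] at hx
      simp [hx]
  have hinj : Function.Injective q := LinearMap.ker_eq_bot.mp hker
  have hdim : Module.finrank ℂ V = Module.finrank ℂ (Module.Dual ℂ V) :=
    Subspace.dual_finrank_eq.symm
  set e : V ≃ₗ[ℂ] Module.Dual ℂ V := q.linearEquivOfInjective hinj hdim with he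
  set T : Module.End ℂ V := e.symm.toLinearMap ∘ₗ q.flip with hTdef
  have hT : ∀ x y : V, q (T x) y = q y x := by
    intro x y
    have h2 : q (T x) = q.flip x := by
      have : e (e.symm (q.flip x)) = q.flip x := e.apply_symm_apply _
      rwa [LinearMap.linearEquivOfInjective_apply] at this
    simpa using DFunLike.congr_fun h2 y
  have hcomm : ∀ (g : G) (x : V), T (ρ g x) = ρ g (T x) := by
    intro g x
    apply hinj
    ext y
    have l1 : q (T (ρ g x)) y = q y (ρ g x) := hT _ _
    have hy : ρ g (ρ g⁻¹ y) = y := by simpa using hcanc g⁻¹ y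
    have l2 : q y (ρ g x) = q (ρ g⁻¹ y) x := by
      conv_lhs => rw [← hy]
      exact hinv g _ _
    have l3 : q (ρ g (T x)) y = q (T x) (ρ g⁻¹ y) := by
      conv_lhs => rw [← hy]
      exact hinv g _ _
    rw [l1, l2, l3, hT]
  obtain ⟨c, hc⟩ := Module.End.exists_eigenvalue T
  have hEtop : Module.End.eigenspace T c = ⊤ := by
    have hEinv : ∀ g : G, ∀ x ∈ Module.End.eigenspace T c, ρ g x ∈ Module.End.eigenspace T c := by
      intro g x hx
      rw [Module.End.mem_eigenspace_iff] at hx ⊢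
      rw [hcomm, hx, map_smul]
    rcases hirr _ hEinv with h | h
    · exact absurd h hc
    · exact h
  have hTx : ∀ x : V, T x = c • x := fun x =>
    Module.End.mem_eigenspace_iff.mp (hEtop ▸ Submodule.mem_top)
  have hsym : ∀ x y : V, q y x = c * q x y := by
    intro x y
    rw [← hT x y, hTx x]
    simp
  obtain ⟨x₀, y₀, h₀⟩ : ∃ x y : V, q x y ≠ 0 := by
    by_contra h
    push_neg at h
    exact hq (by ext x y; simpa using h x y)
  have hc2 : c * c = 1 := by
    have h2 := hsym y₀ x₀
    rw [hsym x₀ y₀] at h2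
    have h3 : (c * c - 1) * q x₀ y₀ = 0 := by linear_combination -h2
    rcases mul_eq_zero.mp h3 with h | h
    · linear_combination h
    · exact absurd h h₀
  rcases mul_self_eq_one_iff.mp hc2 with h | h
  · left
    intro x y
    rw [hsym x y, h, one_mul]
  · right
    intro x
    have := hsym x x
    rw [h] at this
    linear_combination this / 2
end

section
/- Suppose ρ is irreducible, q is a nonzero G-invariant bilinear form on V, and h is a G-invariant positive-definite Hermitian form on V. Then there exists a unique map σ : V → V satisfying q(x, σ(y)) = h(x, y) for all x, y ∈ V, and this σ is conjugate-linear, bijective, and G-equivariant. -/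
/-- If `ρ` is irreducible, `q` is a nonzero `G`-invariant bilinear form on `V`
and `h` is a `G`-invariant positive-definite Hermitian form on `V`, then there exists a
unique map `σ : V → V` with `q x (σ y) = h x y` for all `x, y`, and this `σ` is
conjugate-linear, bijective, and `G`-equivariant. -/
theorem exists_unique_conj_linear_relating_forms
    {G V : Type*} [Group G] [AddCommGroup V] [Module ℂ V]
    [FiniteDimensional ℂ V] [Nontrivial V]
    (ρ : G →* (V ≃ₗ[ℂ] V))
    (hirr : ∀ p : Submodule ℂ V, (∀ g : G, ∀ x ∈ p, ρ g x ∈ p) → p = ⊥ ∨ p = ⊤)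
    (q : V →ₗ[ℂ] V →ₗ[ℂ] ℂ) (hq : q ≠ 0)
    (hinv : ∀ (g : G) (x y : V), q (ρ g x) (ρ g y) = q x y)
    (h : V → V → ℂ)
    (hadd₁ : ∀ x y z : V, h (x + y) z = h x z + h y z)
    (hsmul₁ : ∀ (c : ℂ) (x y : V), h (c • x) y = c * h x y)
    (hherm : ∀ x y : V, h y x = (starRingEnd ℂ) (h x y))
    (hpos : ∀ x : V, x ≠ 0 → 0 < (h x x).re)
    (hinvh : ∀ (g : G) (x y : V), h (ρ g x) (ρ g y) = h x y) :
    (∃! σ : V → V, ∀ x y : V, q x (σ y) = h x y) ∧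
    (∀ σ : V → V, (∀ x y : V, q x (σ y) = h x y) →
      (∀ a b : V, σ (a + b) = σ a + σ b) ∧
      (∀ (c : ℂ) (v : V), σ (c • v) = (starRingEnd ℂ) c • σ v) ∧
      Function.Bijective σ ∧
      (∀ (g : G) (v : V), σ (ρ g v) = ρ g (σ v))) := by
  classical
  have hρ : ∀ (g : G) (x : V), ρ g (ρ g⁻¹ x) = x := by
    intro g x
    have : ρ g * ρ g⁻¹ = 1 := by rw [← map_mul, mul_inv_cancel, map_one]
    calc ρ g (ρ g⁻¹ x) = (ρ g * ρ g⁻¹) x := rfl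
      _ = x := by rw [this]; rfl
  set T : V →ₗ[ℂ] (V →ₗ[ℂ] ℂ) := q.flip with hT
  have hTapp : ∀ v x : V, T v x = q x v := fun v x => rfl
  -- kernel of T is invariant
  have hkerinv : ∀ g : G, ∀ v ∈ LinearMap.ker T, ρ g v ∈ LinearMap.ker T := by
    intro g v hv
    rw [LinearMap.mem_ker] at hv ⊢
    ext x
    have h1 : q x (ρ g v) = q (ρ g⁻¹ x) v := by
      conv_lhs => rw [← hρ g x]
      rw [hinv]
    have h2 : q (ρ g⁻¹ x) v = T v (ρ g⁻¹ x) := rfl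
    have h3 : T v (ρ g⁻¹ x) = 0 := by rw [hv]; rfl
    show T (ρ g v) x = (0 : V →ₗ[ℂ] ℂ) x
    rw [hTapp, h1, h2, h3, LinearMap.zero_apply]
  have hker : LinearMap.ker T = ⊥ := by
    rcases hirr _ hkerinv with h' | h'
    · exact h'
    · exfalso
      apply hq
      ext x y
      have : y ∈ LinearMap.ker T := h' ▸ Submodule.mem_top
      rw [LinearMap.mem_ker] at this
      have := LinearMap.congr_fun this x
      simpa [hTapp] using this
  have hTinj : Function.Injective T := LinearMap.ker_eq_bot.mp hker
  have hTsurj : Function.Surjective T :=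
    (LinearMap.injective_iff_surjective_of_finrank_eq_finrank
      (Subspace.dual_finrank_eq (K := ℂ) (V := V)).symm).mp hTinj
  -- key uniqueness helper
  have uniq : ∀ v w : V, (∀ x, q x v = q x w) → v = w := by
    intro v w hvw
    apply hTinj
    ext x
    simpa [hTapp] using hvw x
  -- the functional x ↦ h x y is linear
  set H : V → (V →ₗ[ℂ] ℂ) := fun y =>
    { toFun := fun x => h x y
      map_add' := fun a b => hadd₁ a b y
      map_smul' := fun c x => hsmul₁ c x y } with hH
  -- existence of σ
  obtain ⟨σ₀, hσ₀⟩ : ∃ σ : V → V, ∀ x y : V, q x (σ y) = h x y := by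
    choose f hf using hTsurj
    refine ⟨fun y => f (H y), fun x y => ?_⟩
    have := LinearMap.congr_fun (hf (H y)) x
    simpa [hTapp, hH] using this
  have conjsmul : ∀ (c : ℂ) (x y : V), h x (c • y) = (starRingEnd ℂ) c * h x y := by
    intro c x y
    rw [hherm, hsmul₁, map_mul, ← hherm]
  constructor
  · refine ⟨σ₀, hσ₀, ?_⟩
    intro σ' hσ'
    funext y
    exact uniq _ _ fun x => by rw [hσ' x y, hσ₀ x y]
  · intro σ hσ
    have hadd : ∀ a b : V, σ (a + b) = σ a + σ b := by
      intro a b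
      refine uniq _ _ fun x => ?_
      rw [hσ x (a + b), map_add]
      have hx : h x (a + b) = h x a + h x b := by
        rw [hherm, hadd₁, map_add, ← hherm, ← hherm]
      rw [hx, hσ x a, hσ x b]
    have hcsmul : ∀ (c : ℂ) (v : V), σ (c • v) = (starRingEnd ℂ) c • σ v := by
      intro c v
      refine uniq _ _ fun x => ?_
      rw [hσ x (c • v), conjsmul, map_smul, smul_eq_mul, hσ x v]
    have hinj : Function.Injective σ := by
      intro a b hab
      have key : ∀ y : V, σ y = 0 → y = 0 := by
        intro y hy
        by_contra hne
        have hz : h y y = 0 := by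
          have := hσ y y
          rw [hy] at this
          simpa using this.symm
        have hp := hpos y hne
        rw [hz] at hp; simp at hp
      have : σ (a - b) = 0 := by
        have : σ (a + -b) = σ a + σ (-b) := hadd a (-b)
        have hneg : σ (-b) = -σ b := by
          have := hcsmul (-1) b
          simpa using this
        rw [sub_eq_add_neg, this, hneg, hab]
        simp
      have := key _ this
      exact sub_eq_zero.mp this
    have hsurj : Function.Surjective σ := by
      let σℝ : V →ₗ[ℝ] V :=
        { toFun := σ
          map_add' := hadd
          map_smul' := by
            intro r v
            have h1 : (r : ℂ) • v = r • v := by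
              simp [Complex.coe_smul]
            have := hcsmul (r : ℂ) v
            rw [h1] at this
            simp only [RingHom.id_apply]
            rw [this]
            simp [Complex.coe_smul, Complex.conj_ofReal] }
      have : Function.Surjective σℝ :=
        (LinearMap.injective_iff_surjective (f := σℝ)).mp hinj
      exact this
    refine ⟨hadd, hcsmul, ⟨hinj, hsurj⟩, ?_⟩
    intro g v
    refine uniq _ _ fun x => ?_
    rw [hσ x (ρ g v)]
    have h1 : q x (ρ g (σ v)) = q (ρ g⁻¹ x) (σ v) := by
      conv_lhs => rw [← hρ g x]
      rw [hinv]
    have h2 : h (ρ g⁻¹ x) v = h x (ρ g v) := by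
      conv_rhs => rw [← hρ g x]
      rw [hinvh]
    rw [h1, hσ _ v, h2]
end

section
/- Suppose ρ is irreducible and σ, τ : V → V are conjugate-linear G-equivariant bijections with σ∘σ = λ·id_V and τ∘τ = μ·id_V for nonzero real numbers λ and μ. Then λμ > 0; in particular, an irreducible representation cannot admit both a conjugate-linear G-equivariant bijection squaring to id_V and one squaring to −id_V. -/
theorem schur_aux {G V : Type*} [Group G] [AddCommGroup V] [Module ℂ V]
    [FiniteDimensional ℂ V] [Nontrivial V]
    (ρ : G →* (V ≃ₗ[ℂ] V))
    (hirr : ∀ p : Submodule ℂ V, (∀ g : G, ∀ x ∈ p, ρ g x ∈ p) → p = ⊥ ∨ p = ⊤)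
    (f : Module.End ℂ V) (hf : ∀ g v, f (ρ g v) = ρ g (f v)) :
    ∃ c : ℂ, ∀ v, f v = c • v := by
  obtain ⟨c, hc⟩ := Module.End.exists_eigenvalue f
  refine ⟨c, ?_⟩
  have hinv : ∀ g : G, ∀ x ∈ f.eigenspace c, ρ g x ∈ f.eigenspace c := by
    intro g x hx
    rw [Module.End.mem_eigenspace_iff] at hx ⊢
    rw [hf, hx, map_smul]
  rcases hirr _ hinv with h | h
  · exact absurd h hc
  · intro v
    have : v ∈ f.eigenspace c := h ▸ Submodule.mem_top
    rwa [Module.End.mem_eigenspace_iff] at this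

/-- If `ρ` is irreducible and `σ, τ : V → V` are conjugate-linear
`G`-equivariant bijections with `σ ∘ σ = λ • id` and `τ ∘ τ = μ • id` for nonzero real
numbers `λ` and `μ`, then `λ * μ > 0`; in particular an irreducible representation cannot
admit both a conjugate-linear `G`-equivariant bijection squaring to `id` and one squaring
to `-id`. -/
theorem conj_linear_equivariant_sq_same_sign
    {G V : Type*} [Group G] [AddCommGroup V] [Module ℂ V]
    [FiniteDimensional ℂ V] [Nontrivial V]
    (ρ : G →* (V ≃ₗ[ℂ] V))
    (hirr : ∀ p : Submodule ℂ V, (∀ g : G, ∀ x ∈ p, ρ g x ∈ p) → p = ⊥ ∨ p = ⊤)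
    (σ τ : V → V) (lam mu : ℝ) (hlam : lam ≠ 0) (hmu : mu ≠ 0)
    (haddσ : ∀ a b : V, σ (a + b) = σ a + σ b)
    (hsmulσ : ∀ (c : ℂ) (v : V), σ (c • v) = (starRingEnd ℂ) c • σ v)
    (hequivσ : ∀ (g : G) (v : V), σ (ρ g v) = ρ g (σ v))
    (hbijσ : Function.Bijective σ)
    (hsqσ : ∀ v : V, σ (σ v) = (lam : ℂ) • v)
    (haddτ : ∀ a b : V, τ (a + b) = τ a + τ b)
    (hsmulτ : ∀ (c : ℂ) (v : V), τ (c • v) = (starRingEnd ℂ) c • τ v)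
    (hequivτ : ∀ (g : G) (v : V), τ (ρ g v) = ρ g (τ v))
    (hbijτ : Function.Bijective τ)
    (hsqτ : ∀ v : V, τ (τ v) = (mu : ℂ) • v) :
    0 < lam * mu := by
  set f : Module.End ℂ V :=
    { toFun := fun v => σ (τ v)
      map_add' := fun a b => by show σ (τ (a + b)) = _; rw [haddτ, haddσ]
      map_smul' := fun c v => by
        simp [hsmulτ, hsmulσ, Complex.conj_conj] } with hfdef
  obtain ⟨c, hc⟩ := schur_aux ρ hirr f (fun g v => by
    simp only [hfdef, LinearMap.coe_mk, AddHom.coe_mk, hequivτ, hequivσ])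
  obtain ⟨d, hd⟩ := schur_aux ρ hirr
    { toFun := fun v => τ (σ v)
      map_add' := fun a b => by show τ (σ (a + b)) = _; rw [haddσ, haddτ]
      map_smul' := fun cc v => by
        simp [hsmulτ, hsmulσ, Complex.conj_conj] }
    (fun g v => by simp only [LinearMap.coe_mk, AddHom.coe_mk, hequivσ, hequivτ])
  simp only [LinearMap.coe_mk, AddHom.coe_mk] at hd
  have hcστ : ∀ v, σ (τ v) = c • v := fun v => hc v
  -- c ≠ 0
  obtain ⟨v₀, hv₀⟩ := exists_ne (0 : V)
  have hcne : c ≠ 0 := by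
    intro h
    have h1 : σ (τ v₀) = 0 := by rw [hcστ, h, zero_smul]
    have hσ0 : σ (0 : V) = 0 := by
      have := haddσ 0 0
      simp at this; linear_combination (norm := module) this
    have := hbijσ.injective (h1.trans hσ0.symm)
    have := hbijτ.injective (this.trans (by
      have : τ (0 : V) = 0 := by
        have := haddτ 0 0; simp at this; linear_combination (norm := module) this
      exact this.symm))
    exact hv₀ this
  -- c = conj d :  σ τ σ τ v = c^2 v  and = conj d * c v
  have key1 : ∀ v, σ (τ (σ (τ v))) = (c * c) • v := by
    intro v
    rw [hcστ (σ (τ v)), hcστ v, smul_smul]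
  have key1' : ∀ v : V, σ (τ (σ (τ v))) = (starRingEnd ℂ d * c) • v := by
    intro v
    rw [hd (τ v), hsmulσ, hcστ v, smul_smul]
  have hcd : c = starRingEnd ℂ d := by
    have := (key1 v₀).symm.trans (key1' v₀)
    have h2 : ((c * c - starRingEnd ℂ d * c) : ℂ) • v₀ = 0 := by
      rw [sub_smul, this, sub_self]
    rcases smul_eq_zero.mp h2 with h | h
    · have := sub_eq_zero.mp h
      exact mul_right_cancel₀ hcne this
    · exact absurd h hv₀
  -- λμ = c * d : σ τ τ σ v = μ λ v and = c d v
  have key2 : ∀ v, σ (τ (τ (σ v))) = ((lam * mu : ℝ) : ℂ) • v := by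
    intro v
    rw [hsqτ (σ v), hsmulσ, hsqσ v, smul_smul]
    push_cast
    rw [Complex.conj_ofReal]
    ring_nf
  have key2' : ∀ v, σ (τ (τ (σ v))) = (c * d) • v := by
    intro v
    rw [hd v, hsmulτ, hsmulσ, Complex.conj_conj, hcστ v, smul_smul, mul_comm]
  have hlm : ((lam * mu : ℝ) : ℂ) = c * d := by
    have := (key2 v₀).symm.trans (key2' v₀)
    have h2 : (((lam * mu : ℝ) : ℂ) - c * d) • v₀ = 0 := by
      rw [sub_smul, this, sub_self]
    rcases smul_eq_zero.mp h2 with h | h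
    · exact sub_eq_zero.mp h
    · exact absurd h hv₀
  have : ((lam * mu : ℝ) : ℂ) = Complex.normSq d := by
    rw [hlm, hcd]
    simp [Complex.normSq_eq_conj_mul_self]
  have hdne : d ≠ 0 := by
    intro h; rw [h, map_zero] at hcd; exact hcne hcd
  have hpos : 0 < Complex.normSq d := Complex.normSq_pos.mpr hdne
  have heq : lam * mu = Complex.normSq d := by
    exact_mod_cast this
  rw [heq]; exact hpos
end

section
/- Suppose ρ is irreducible, q is a nonzero G-invariant bilinear form on V, h is a G-invariant positive-definite Hermitian form on V, and σ : V → V is the conjugate-linear G-equivariant bijection satisfying q(x, σ(y)) = h(x, y) for all x, y ∈ V. Then σ∘σ = λ·id_V for a nonzero real number λ, and moreover λ > 0 if and only if q is symmetric, while λ < 0 if and only if q is alternating. -/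
open Module

/-- Schur's lemma: a linear endomorphism commuting with an irreducible action is scalar. -/
theorem schur_scalar_aux {G V : Type*} [Group G] [AddCommGroup V] [Module ℂ V]
    [FiniteDimensional ℂ V] [Nontrivial V]
    (ρ : G →* (V ≃ₗ[ℂ] V))
    (hirr : ∀ p : Submodule ℂ V, (∀ g : G, ∀ x ∈ p, ρ g x ∈ p) → p = ⊥ ∨ p = ⊤)
    (T : V →ₗ[ℂ] V) (hT : ∀ (g : G) (v : V), T (ρ g v) = ρ g (T v)) :
    ∃ c : ℂ, ∀ v : V, T v = c • v := by
  obtain ⟨c, hc⟩ := Module.End.exists_eigenvalue (T : Module.End ℂ V)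
  refine ⟨c, fun v => ?_⟩
  have hstab : ∀ g : G, ∀ x ∈ Module.End.eigenspace (T : Module.End ℂ V) c,
      ρ g x ∈ Module.End.eigenspace (T : Module.End ℂ V) c := by
    intro g x hx
    rw [Module.End.mem_eigenspace_iff] at hx ⊢
    show T (ρ g x) = c • ρ g x
    rw [hT, hx, map_smul]
  rcases hirr _ hstab with hb | ht
  · exact absurd hb hc
  · have : v ∈ Module.End.eigenspace (T : Module.End ℂ V) c := ht ▸ Submodule.mem_top
    exact Module.End.mem_eigenspace_iff.mp this

theorem sign_of_sq_detects_symmetry_type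
    {G V : Type*} [Group G] [AddCommGroup V] [Module ℂ V]
    [FiniteDimensional ℂ V] [Nontrivial V]
    (ρ : G →* (V ≃ₗ[ℂ] V))
    (hirr : ∀ p : Submodule ℂ V, (∀ g : G, ∀ x ∈ p, ρ g x ∈ p) → p = ⊥ ∨ p = ⊤)
    (q : V →ₗ[ℂ] V →ₗ[ℂ] ℂ) (hq : q ≠ 0)
    (hinv : ∀ (g : G) (x y : V), q (ρ g x) (ρ g y) = q x y)
    (h : V → V → ℂ)
    (hadd₁ : ∀ x y z : V, h (x + y) z = h x z + h y z)
    (hsmul₁ : ∀ (c : ℂ) (x y : V), h (c • x) y = c * h x y)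
    (hherm : ∀ x y : V, h y x = (starRingEnd ℂ) (h x y))
    (hpos : ∀ x : V, x ≠ 0 → 0 < (h x x).re)
    (hinvh : ∀ (g : G) (x y : V), h (ρ g x) (ρ g y) = h x y)
    (σ : V → V)
    (hadd : ∀ a b : V, σ (a + b) = σ a + σ b)
    (hsmul : ∀ (c : ℂ) (v : V), σ (c • v) = (starRingEnd ℂ) c • σ v)
    (hequiv : ∀ (g : G) (v : V), σ (ρ g v) = ρ g (σ v))
    (hbij : Function.Bijective σ)
    (hσ : ∀ x y : V, q x (σ y) = h x y) :
    ∃ lam : ℝ, lam ≠ 0 ∧ (∀ v : V, σ (σ v) = (lam : ℂ) • v) ∧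
      (0 < lam ↔ ∀ x y : V, q x y = q y x) ∧
      (lam < 0 ↔ ∀ x : V, q x x = 0) := by
  -- σ 0 = 0
  have hσ0 : σ 0 = 0 := by
    have := hadd 0 0
    rw [add_zero] at this
    exact (left_eq_add.mp this)
  -- T = σ ∘ σ as a ℂ-linear map
  set T : V →ₗ[ℂ] V :=
    { toFun := fun v => σ (σ v)
      map_add' := fun a b => by show σ (σ (a+b)) = σ (σ a) + σ (σ b); rw [hadd, hadd]
      map_smul' := fun c v => by
        show σ (σ (c • v)) = c • σ (σ v)
        rw [hsmul, hsmul, Complex.conj_conj] } with hTdef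
  have hTequiv : ∀ (g : G) (v : V), T (ρ g v) = ρ g (T v) := by
    intro g v
    show σ (σ (ρ g v)) = ρ g (σ (σ v))
    rw [hequiv, hequiv]
  obtain ⟨c, hc⟩ := schur_scalar_aux ρ hirr T hTequiv
  have hσσ : ∀ v : V, σ (σ v) = c • v := hc
  -- c ≠ 0
  have hc0 : c ≠ 0 := by
    intro hc0
    obtain ⟨v, hv⟩ := exists_ne (0 : V)
    have h1 : σ (σ v) = 0 := by rw [hσσ, hc0, zero_smul]
    have h2 : σ (σ v) = σ (σ 0) := by rw [hσ0, hσ0, h1]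
    exact hv (hbij.1 (hbij.1 h2))
  -- key identity (R)
  have hR : ∀ x y : V, q (σ x) (σ y) = (starRingEnd ℂ) c * (starRingEnd ℂ) (q y x) := by
    intro x y
    have e1 : q (σ x) (σ y) = h (σ x) y := hσ (σ x) y
    have e2 : h (σ x) y = (starRingEnd ℂ) (h y (σ x)) := hherm y (σ x)
    have e3 : h y (σ x) = c * q y x := by
      rw [← hσ y (σ x), hσσ x, map_smul, smul_eq_mul]
    rw [e1, e2, e3, map_mul]
  -- point where q is nonzero
  have hqpt : ∃ x y : V, q x y ≠ 0 := by
    by_contra hcon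
    push_neg at hcon
    exact hq (by ext x y; simp [hcon])
  obtain ⟨x₀, y₀, hx0y0⟩ := hqpt
  -- c is real
  have hcreal : (starRingEnd ℂ) c = c := by
    have e1 : q (σ (σ x₀)) (σ (σ y₀)) = c * c * q x₀ y₀ := by
      rw [hσσ, hσσ, map_smul, map_smul]
      simp only [LinearMap.smul_apply, smul_eq_mul]
      ring
    have e2 : q (σ (σ x₀)) (σ (σ y₀))
        = (starRingEnd ℂ) c * (starRingEnd ℂ) (q (σ y₀) (σ x₀)) := hR (σ x₀) (σ y₀)
    rw [hR y₀ x₀] at e2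
    simp only [map_mul, Complex.conj_conj] at e2
    rw [e1] at e2
    have h3 : ((starRingEnd ℂ) c - c) * (c * q x₀ y₀) = 0 := by linear_combination -e2
    rcases mul_eq_zero.mp h3 with h' | h'
    · exact sub_eq_zero.mp h'
    · rcases mul_eq_zero.mp h' with h'' | h''
      · exact absurd h'' hc0
      · exact absurd h'' hx0y0
  set lam : ℝ := c.re with hlamdef
  have hclam : (lam : ℂ) = c := by
    have h' := Complex.conj_eq_iff_re.mp hcreal
    rw [hlamdef]
    linear_combination h'
  have hlam0 : lam ≠ 0 := by
    intro h'
    apply hc0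
    rw [← hclam, h', Complex.ofReal_zero]
  -- the swap operator A : q x (A y) = q y x
  have hflipinj : Function.Injective (q.flip) := by
    rw [← LinearMap.ker_eq_bot]
    rw [LinearMap.ker_eq_bot']
    intro z hz
    obtain ⟨w, hw⟩ := hbij.2 z
    have hz' : ∀ x : V, q x z = 0 := fun x => by
      simpa using LinearMap.congr_fun hz x
    have hw0 : w = 0 := by
      by_contra hw0
      have := hpos w hw0
      rw [← hσ w w, hw, hz' w] at this
      simp at this
    rw [← hw, hw0, hσ0]
  have hdim : finrank ℂ V = finrank ℂ (Module.Dual ℂ V) := Subspace.dual_finrank_eq.symm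
  set E : V ≃ₗ[ℂ] Module.Dual ℂ V := q.flip.linearEquivOfInjective hflipinj hdim with hEdef
  have hEapp : ∀ v : V, E v = q.flip v := fun v =>
    LinearMap.linearEquivOfInjective_apply hflipinj hdim v
  set A : V →ₗ[ℂ] V := E.symm.toLinearMap ∘ₗ q with hAdef
  have hAprop : ∀ x y : V, q x (A y) = q y x := by
    intro x y
    have : q.flip (A y) = q y := by
      show q.flip (E.symm (q y)) = q y
      rw [← hEapp, LinearEquiv.apply_symm_apply]
    calc q x (A y) = q.flip (A y) x := rfl
      _ = q y x := by rw [this]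
  -- ρ g (ρ g⁻¹ x) = x
  have hρρ : ∀ (g : G) (x : V), ρ g (ρ g⁻¹ x) = x := by
    intro g x
    have h1 : ρ g * ρ g⁻¹ = 1 := by rw [← map_mul, mul_inv_cancel, map_one]
    calc ρ g (ρ g⁻¹ x) = (ρ g * ρ g⁻¹) x := rfl
      _ = x := by rw [h1]; rfl
  have hAequiv : ∀ (g : G) (v : V), A (ρ g v) = ρ g (A v) := by
    intro g y
    apply hflipinj
    apply LinearMap.ext
    intro x
    show q x (A (ρ g y)) = q x (ρ g (A y))
    rw [hAprop]
    conv_rhs => rw [← hρρ g x]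
    rw [hinv g (ρ g⁻¹ x) (A y), hAprop, ← hinv g y (ρ g⁻¹ x), hρρ]
  obtain ⟨μ, hμ⟩ := schur_scalar_aux ρ hirr A hAequiv
  have hswap : ∀ x y : V, q y x = μ * q x y := by
    intro x y
    rw [← hAprop x y, hμ, map_smul, smul_eq_mul]
  -- μ² = 1
  have hμ1 : μ = 1 ∨ μ = -1 := by
    have : q x₀ y₀ = μ * (μ * q x₀ y₀) := by
      rw [← hswap x₀ y₀, ← hswap y₀ x₀]
    have h2 : (μ * μ - 1) * q x₀ y₀ = 0 := by linear_combination -this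
    rcases mul_eq_zero.mp h2 with h' | h'
    · exact mul_self_eq_one_iff.mp (sub_eq_zero.mp h')
    · exact absurd h' hx0y0
  -- positivity data at a fixed nonzero vector
  obtain ⟨v₀, hv₀⟩ := exists_ne (0 : V)
  have hσv₀ : σ v₀ ≠ 0 := by
    intro h'
    apply hv₀
    exact hbij.1 (h'.trans hσ0.symm)
  have hreal : ∀ x : V, h x x = ((h x x).re : ℂ) := by
    intro x
    have h' := Complex.conj_eq_iff_re.mp (hherm x x).symm
    linear_combination -h'
  set a : ℝ := (h v₀ v₀).re with hadef
  set b : ℝ := (h (σ v₀) (σ v₀)).re with hbdef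
  have ha : 0 < a := hpos v₀ hv₀
  have hb : 0 < b := hpos (σ v₀) hσv₀
  -- b = lam * μ * a (as complex numbers)
  have hkey : (b : ℂ) = (lam : ℂ) * μ * (a : ℂ) := by
    have e1 : h (σ v₀) (σ v₀) = q (σ v₀) (σ (σ v₀)) := (hσ _ _).symm
    have e2 : q (σ v₀) (σ (σ v₀)) = (lam : ℂ) * q (σ v₀) v₀ := by
      rw [hσσ, ← hclam, map_smul, smul_eq_mul]
    have e3 : q (σ v₀) v₀ = μ * q v₀ (σ v₀) := hswap v₀ (σ v₀)
    have e4 : q v₀ (σ v₀) = h v₀ v₀ := hσ _ _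
    calc (b : ℂ) = h (σ v₀) (σ v₀) := (hreal _).symm
      _ = (lam : ℂ) * (μ * (h v₀ v₀)) := by rw [e1, e2, e3, e4]
      _ = (lam : ℂ) * μ * (a : ℂ) := by rw [hreal v₀]; ring
  -- sign facts
  have hcase1 : μ = 1 → 0 < lam := by
    intro hμe
    have hba : b = lam * a := by
      have h5 : (b : ℂ) = ((lam * a : ℝ) : ℂ) := by push_cast; linear_combination hkey + (a:ℂ) * (lam:ℂ) * (hμe ▸ rfl : μ = 1)
      exact_mod_cast h5
    nlinarith
  have hcase2 : μ = -1 → lam < 0 := by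
    intro hμe
    rw [hμe] at hkey
    have hba : b = -(lam * a) := by
      have h5 : (b : ℂ) = ((-(lam * a) : ℝ) : ℂ) := by push_cast; linear_combination hkey
      exact_mod_cast h5
    nlinarith
  refine ⟨lam, hlam0, fun v => by rw [hσσ, hclam], ?_, ?_⟩
  · constructor
    · intro hl x y
      rcases hμ1 with hμe | hμe
      · rw [hswap x y, hμe, one_mul]
      · exact absurd hl (not_lt.mpr (le_of_lt (hcase2 hμe)))
    · intro hsym
      have hμe : μ = 1 := by
        rcases hμ1 with hμe | hμe
        · exact hμe
        · exfalso
          have h1 : q y₀ x₀ = -q x₀ y₀ := by rw [hswap x₀ y₀, hμe]; ring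
          have h2 : q x₀ y₀ = q y₀ x₀ := hsym x₀ y₀
          rw [h2] at h1
          have : (2 : ℂ) * q y₀ x₀ = 0 := by linear_combination h1
          have : q y₀ x₀ = 0 := by
            rcases mul_eq_zero.mp this with h' | h'
            · norm_num at h'
            · exact h'
          rw [h2] at hx0y0
          exact hx0y0 this
      exact hcase1 hμe
  · constructor
    · intro hl x
      have hμe : μ = -1 := by
        rcases hμ1 with hμe | hμe
        · exact absurd hl (not_lt.mpr (le_of_lt (hcase1 hμe)))
        · exact hμe
      have h1 : q x x = -q x x := by
        conv_lhs => rw [hswap x x, hμe]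
        ring
      have h2 : (2 : ℂ) * q x x = 0 := by linear_combination h1
      exact (mul_eq_zero.mp h2).resolve_left (by norm_num)
    · intro halt
      have hanti : ∀ x y : V, q y x = -q x y := by
        intro x y
        have h2 := halt (x + y)
        simp only [map_add, LinearMap.add_apply] at h2
        linear_combination h2 - halt x - halt y
      have hμe : μ = -1 := by
        have h1 : q y₀ x₀ = μ * q x₀ y₀ := hswap x₀ y₀
        have h2 : q y₀ x₀ = -q x₀ y₀ := hanti x₀ y₀
        have : (μ + 1) * q x₀ y₀ = 0 := by rw [add_mul, ← h1, h2]; ring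
        rcases mul_eq_zero.mp this with h' | h'
        · exact eq_neg_of_add_eq_zero_left h'
        · exact absurd h' hx0y0
      exact hcase2 hμe
end

section
/- Suppose ρ is irreducible and σ : V → V is a conjugate-linear G-equivariant map with σ∘σ = id_V. Then the real subspace W = {v ∈ V : σ(v) = v} is invariant under all ρ(g), V = W ⊕ iW as real vector spaces (so the natural map ℂ ⊗_ℝ W → V is an isomorphism), and W is irreducible as a real representation of G, i.e. the only ρ(G)-invariant real subspaces of W are 0 and W. -/
/-- If `ρ` is irreducible and `σ : V → V` is a conjugate-linear
`G`-equivariant map with `σ ∘ σ = id`, then the real subspace `W = {v | σ v = v}` is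
invariant under all `ρ g`, `V = W ⊕ i W` as real vector spaces (every `v` is uniquely
`w₁ + i • w₂` with `w₁, w₂ ∈ W`), and `W` is irreducible as a real representation of `G`. -/
theorem fixed_points_real_form
    {G V : Type*} [Group G] [AddCommGroup V] [Module ℂ V]
    [FiniteDimensional ℂ V] [Nontrivial V]
    (ρ : G →* (V ≃ₗ[ℂ] V))
    (hirr : ∀ p : Submodule ℂ V, (∀ g : G, ∀ x ∈ p, ρ g x ∈ p) → p = ⊥ ∨ p = ⊤)
    (σ : V → V)
    (hadd : ∀ a b : V, σ (a + b) = σ a + σ b)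
    (hsmul : ∀ (c : ℂ) (v : V), σ (c • v) = (starRingEnd ℂ) c • σ v)
    (hequiv : ∀ (g : G) (v : V), σ (ρ g v) = ρ g (σ v))
    (hsq : ∀ v : V, σ (σ v) = v) :
    ∃ W : Submodule ℝ V, (W : Set V) = {v : V | σ v = v} ∧
      (∀ g : G, ∀ v ∈ W, ρ g v ∈ W) ∧
      (∀ v : V, ∃! p : W × W, v = (p.1 : V) + Complex.I • (p.2 : V)) ∧
      (∀ p : Submodule ℝ V, p ≤ W → (∀ g : G, ∀ x ∈ p, ρ g x ∈ p) →
        p = ⊥ ∨ p = W) := by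
  have h0 : σ 0 = 0 := by
    have h := hadd 0 0
    rw [add_zero] at h
    exact (left_eq_add.mp h)
  have hneg : ∀ v : V, σ (-v) = -σ v := by
    intro v
    have h := hadd v (-v)
    rw [add_neg_cancel, h0] at h
    exact eq_neg_of_add_eq_zero_right h.symm
  have hsub : ∀ a b : V, σ (a - b) = σ a - σ b := by
    intro a b
    rw [sub_eq_add_neg, hadd, hneg, sub_eq_add_neg]
  have hr : ∀ (a : ℝ) (v : V), σ (a • v) = a • σ v := by
    intro a v
    show σ ((a : ℂ) • v) = (a : ℂ) • σ v
    rw [hsmul, Complex.conj_ofReal]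
  have hconj2 : (starRingEnd ℂ) (1/2) = 1/2 := by
    rw [map_div₀, map_one, Complex.conj_ofNat]
  have hconjI2 : (starRingEnd ℂ) (-(Complex.I)/2) = Complex.I/2 := by
    rw [map_div₀, map_neg, Complex.conj_I, neg_neg, Complex.conj_ofNat]
  have hIc : Complex.I * (-(Complex.I)/2) = 1/2 := by
    linear_combination (-1/2 : ℂ) * Complex.I_mul_I
  refine ⟨{ carrier := {v : V | σ v = v}
            add_mem' := by
              intro a b ha hb
              simp only [Set.mem_setOf_eq] at *
              rw [hadd, ha, hb]
            zero_mem' := h0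
            smul_mem' := by
              intro a v hv
              simp only [Set.mem_setOf_eq] at *
              rw [hr, hv] }, rfl, ?_, ?_, ?_⟩
  · -- invariance
    intro g v hv
    show σ (ρ g v) = ρ g v
    rw [hequiv]
    exact congrArg _ hv
  · -- unique decomposition
    intro v
    have huniq : ∀ a b : V, σ a = a → σ b = b → a + Complex.I • b = 0 → a = 0 ∧ b = 0 := by
      intro a b ha hb h
      have h2 : a - Complex.I • b = 0 := by
        have h' := congrArg σ h
        rw [hadd, hsmul, ha, hb, h0, Complex.conj_I] at h'
        rw [sub_eq_add_neg, ← neg_smul]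
        exact h'
      have hb0 : b = 0 := by
        have hib : (Complex.I • b : V) = 0 := by
          have h3 : a = Complex.I • b := sub_eq_zero.mp h2
          rw [h3] at h
          have h4 : (2 : ℂ) • (Complex.I • b) = 0 := by
            rw [two_smul]; exact h
          rcases smul_eq_zero.mp h4 with h5 | h5
          · exact absurd h5 two_ne_zero
          · exact h5
        rcases smul_eq_zero.mp hib with h5 | h5
        · exact absurd h5 Complex.I_ne_zero
        · exact h5
      have ha0 : a = 0 := by
        rw [hb0, smul_zero, add_zero] at h
        exact h
      exact ⟨ha0, hb0⟩
    set w₁ : V := (1/2 : ℂ) • (v + σ v) with hw₁def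
    set w₂ : V := (-(Complex.I)/2 : ℂ) • (v - σ v) with hw₂def
    have hw1 : σ w₁ = w₁ := by
      rw [hw₁def, hsmul, hadd, hsq, hconj2]
      module
    have hw2 : σ w₂ = w₂ := by
      rw [hw₂def, hsmul, hsub, hsq, hconjI2]
      module
    have hv' : v = w₁ + Complex.I • w₂ := by
      rw [hw₁def, hw₂def, smul_smul, hIc]
      module
    refine ⟨(⟨w₁, hw1⟩, ⟨w₂, hw2⟩), hv', ?_⟩
    rintro ⟨⟨a, ha⟩, ⟨b, hb⟩⟩ hab
    simp only at hab
    have key : (a - w₁) + Complex.I • (b - w₂) = 0 := by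
      rw [smul_sub, sub_add_sub_comm, ← hab, ← hv', sub_self]
    obtain ⟨h1, h2⟩ := huniq _ _ (by rw [hsub, ha, hw1]) (by rw [hsub, hb, hw2]) key
    have ha' : a = w₁ := sub_eq_zero.mp h1
    have hb' : b = w₂ := sub_eq_zero.mp h2
    ext <;> simp [ha', hb']
  · -- irreducibility
    intro p hpW hpInv
    by_cases hbot : p = ⊥
    · exact Or.inl hbot
    right
    set q : Submodule ℂ V := Submodule.span ℂ (p : Set V) with hq
    have hqInv : ∀ g : G, ∀ x ∈ q, ρ g x ∈ q := by
      intro g x hx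
      induction hx using Submodule.span_induction with
      | mem y hy => exact Submodule.subset_span (hpInv g y hy)
      | zero => rw [map_zero]; exact q.zero_mem
      | add a b _ _ ha hb => rw [map_add]; exact q.add_mem ha hb
      | smul c a _ ha => rw [map_smul]; exact q.smul_mem c ha
    have hqtop : q = ⊤ := by
      rcases hirr q hqInv with h | h
      · exfalso
        obtain ⟨x, hx, hx0⟩ := (Submodule.ne_bot_iff p).mp hbot
        have hxq : x ∈ q := Submodule.subset_span hx
        rw [h, Submodule.mem_bot] at hxq
        exact hx0 hxq
      · exact h
    have key : ∀ v ∈ q, ∀ c : ℂ, (1/2 : ℂ) • (c • v + σ (c • v)) ∈ p := by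
      intro v hv
      induction hv using Submodule.span_induction with
      | mem x hx =>
        intro c
        have hσx : σ x = x := hpW hx
        rw [hsmul, hσx]
        have heq : (1/2 : ℂ) • (c • x + (starRingEnd ℂ) c • x) = (c.re : ℝ) • x := by
          show _ = ((c.re : ℝ) : ℂ) • x
          rw [← add_smul, smul_smul]
          congr 1
          rw [Complex.add_conj]
          push_cast
          ring
        rw [heq]
        exact p.smul_mem _ hx
      | zero => intro c; simp only [smul_zero, h0, add_zero, zero_add]; exact p.zero_mem
      | add a b _ _ ha hb =>
        intro c
        have heq : (1/2 : ℂ) • (c • (a + b) + σ (c • (a + b)))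
            = (1/2 : ℂ) • (c • a + σ (c • a)) + (1/2 : ℂ) • (c • b + σ (c • b)) := by
          rw [smul_add c a b, hadd]
          module
        rw [heq]
        exact p.add_mem (ha c) (hb c)
      | smul d a _ ha =>
        intro c
        rw [smul_smul]
        exact ha (c * d)
    apply le_antisymm hpW
    intro w hw
    have hwq : w ∈ q := by rw [hqtop]; trivial
    have hmem := key w hwq 1
    have hσw : σ w = w := hw
    rw [one_smul, hσw] at hmem
    have h2 : (1/2 : ℂ) • (w + w) = w := by module
    rwa [h2] at hmem
end

section
/- Suppose ρ is irreducible, V admits a G-invariant positive-definite Hermitian form h, and V admits a nonzero G-invariant symmetric bilinear form q. Then V admits a conjugate-linear G-equivariant bijection σ with σ∘σ = id_V. -/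
/-!
The Hermitian form makes `V` a finite-dimensional inner product space, so by Riesz
representation there is a conjugate-linear `σ` with `⟪σ x, y⟫ = q y x`. Invariance of both forms
makes `σ` equivariant, so the linear map `σ ∘ σ` commutes with `G` and is a scalar `μ` by Schur's
lemma. Symmetry of `q` gives `⟪σ (σ x), x⟫ = ‖σ x‖²`, i.e. `conj μ * ‖x‖² = ‖σ x‖²`; choosing `x`
with `σ x ≠ 0` (possible as `q ≠ 0`) shows that `μ` is a positive real, and `σ / √μ` is the
required involution.
-/

open scoped ComplexOrder InnerProductSpace

section Schur

variable {K V G : Type*} [Field K] [IsAlgClosed K] [AddCommGroup V] [Module K V]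
  [FiniteDimensional K V] [Nontrivial V] [Monoid G]

theorem exists_eq_smul_of_commute_of_irreducible (ρ : G →* (V ≃ₗ[K] V))
    (hirr : ∀ p : Submodule K V, (∀ g : G, ∀ x ∈ p, ρ g x ∈ p) → p = ⊥ ∨ p = ⊤)
    (f : Module.End K V) (hf : ∀ g x, f (ρ g x) = ρ g (f x)) :
    ∃ μ : K, ∀ x, f x = μ • x := by
  obtain ⟨μ, hμ⟩ := f.exists_eigenvalue
  have hinvariant : ∀ g, ∀ x ∈ f.eigenspace μ, ρ g x ∈ f.eigenspace μ := by
    intro g x hx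
    rw [Module.End.mem_eigenspace_iff] at hx ⊢
    rw [hf, hx, map_smul]
  refine ⟨μ, fun x => Module.End.mem_eigenspace_iff.mp ?_⟩
  rcases hirr _ hinvariant with hbot | htop
  · exact absurd hbot hμ
  · exact htop ▸ Submodule.mem_top

end Schur

section Riesz

variable {E : Type*} [NormedAddCommGroup E] [InnerProductSpace ℂ E] [FiniteDimensional ℂ E]

noncomputable def conjLinearMapOfBilin (q : E →ₗ[ℂ] E →ₗ[ℂ] ℂ) : E →ₗ⋆[ℂ] E :=
  (InnerProductSpace.toDual ℂ E).symm.toLinearEquiv.toLinearMap ∘ₛₗ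
    (LinearMap.toContinuousLinearMap.toLinearMap ∘ₗ q.flip)

variable (q : E →ₗ[ℂ] E →ₗ[ℂ] ℂ)

@[simp]
theorem inner_conjLinearMapOfBilin (x y : E) : ⟪conjLinearMapOfBilin q x, y⟫_ℂ = q y x := by
  simp [conjLinearMapOfBilin, InnerProductSpace.toDual_symm_apply]

theorem conjLinearMapOfBilin_map (U : E ≃ₗ[ℂ] E) (hU : ∀ x y, ⟪U x, U y⟫_ℂ = ⟪x, y⟫_ℂ)
    (hqU : ∀ x y, q (U x) (U y) = q x y) (x : E) :
    conjLinearMapOfBilin q (U x) = U (conjLinearMapOfBilin q x) := by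
  refine ext_inner_right ℂ fun y => ?_
  obtain ⟨z, rfl⟩ := U.surjective y
  rw [hU, inner_conjLinearMapOfBilin, inner_conjLinearMapOfBilin, hqU]

theorem inner_conjLinearMapOfBilin_conjLinearMapOfBilin (hq : ∀ x y, q x y = q y x) (x y : E) :
    ⟪conjLinearMapOfBilin q (conjLinearMapOfBilin q x), y⟫_ℂ =
      ⟪conjLinearMapOfBilin q y, conjLinearMapOfBilin q x⟫_ℂ := by
  rw [inner_conjLinearMapOfBilin, inner_conjLinearMapOfBilin, hq]

theorem pos_of_conjLinearMapOfBilin_comp_self (hq : ∀ x y, q x y = q y x) {μ : ℂ}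
    (hμ : ∀ x, conjLinearMapOfBilin q (conjLinearMapOfBilin q x) = μ • x) {v : E}
    (hv : conjLinearMapOfBilin q v ≠ 0) : 0 < μ := by
  set σ := conjLinearMapOfBilin q
  have hv0 : v ≠ 0 := by rintro rfl; exact hv (map_zero σ)
  have hnorms : (starRingEnd ℂ) μ * (‖v‖ : ℂ) ^ 2 = (‖σ v‖ : ℂ) ^ 2 := by
    have := inner_conjLinearMapOfBilin_conjLinearMapOfBilin q hq v v
    rwa [hμ, inner_smul_left, inner_self_eq_norm_sq_to_K, inner_self_eq_norm_sq_to_K] at this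
  have hconj : (starRingEnd ℂ) μ = ((‖σ v‖ ^ 2 / ‖v‖ ^ 2 : ℝ) : ℂ) := by
    push_cast
    exact eq_div_of_mul_eq (by simpa using hv0) hnorms
  rw [← Complex.conj_conj μ, hconj, Complex.conj_ofReal, Complex.zero_lt_real]
  positivity

end Riesz

theorem exists_involutive_smul_of_comp_self_eq_smul {V : Type*} [AddCommGroup V] [Module ℂ V]
    (σ : V →ₗ⋆[ℂ] V) {μ : ℂ} (hμ : 0 < μ) (hσ : ∀ x, σ (σ x) = μ • x) :
    ∃ c : ℂ, Function.Involutive (c • σ) := by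
  obtain ⟨r, hr, rfl⟩ := RCLike.pos_iff_exists_ofReal.mp hμ
  change ∀ x, σ (σ x) = (r : ℂ) • x at hσ
  set c : ℝ := (√r)⁻¹
  have hc : (c : ℂ) * (c * r) = 1 := by
    norm_cast
    rw [← mul_assoc, ← sq, inv_pow, Real.sq_sqrt hr.le, inv_mul_cancel₀ hr.ne']
  refine ⟨c, fun x => ?_⟩
  simp only [LinearMap.smul_apply, map_smulₛₗ, hσ, smul_smul, Complex.conj_ofReal]
  rw [hc, one_smul]

/-- The inner product is conjugate-linear in its first argument, hence `inner x y := h y x`. -/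
noncomputable abbrev hermitianFormCore {V : Type*} [AddCommGroup V] [Module ℂ V] (h : V → V → ℂ)
    (hadd : ∀ x y z : V, h (x + y) z = h x z + h y z)
    (hsmul : ∀ (c : ℂ) (x y : V), h (c • x) y = c * h x y)
    (hherm : ∀ x y : V, h y x = (starRingEnd ℂ) (h x y))
    (hpos : ∀ x : V, x ≠ 0 → 0 < (h x x).re) : InnerProductSpace.Core ℂ V where
  inner x y := h y x
  conj_inner_symm x y := (hherm x y).symm
  re_inner_nonneg x := by
    rcases eq_or_ne x 0 with rfl | hx
    · simpa using (congrArg Complex.re (hsmul 0 0 0)).ge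
    · exact (hpos x hx).le
  add_left x y z := by
    simp only [hherm _ z, hadd, map_add]
  smul_left x y c := by
    simp only [hherm _ y, hsmul, map_mul]
  definite x hx := by
    by_contra hx0
    simpa [hx] using hpos x hx0

theorem real_structure_of_symmetric_form_general
    {G V : Type*} [Group G] [AddCommGroup V] [Module ℂ V]
    [FiniteDimensional ℂ V]
    (ρ : G →* (V ≃ₗ[ℂ] V))
    (hirr : ∀ p : Submodule ℂ V, (∀ g : G, ∀ x ∈ p, ρ g x ∈ p) → p = ⊥ ∨ p = ⊤)
    (h : V → V → ℂ)
    (hadd₁ : ∀ x y z : V, h (x + y) z = h x z + h y z)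
    (hsmul₁ : ∀ (c : ℂ) (x y : V), h (c • x) y = c * h x y)
    (hherm : ∀ x y : V, h y x = (starRingEnd ℂ) (h x y))
    (hpos : ∀ x : V, x ≠ 0 → 0 < (h x x).re)
    (hinvh : ∀ (g : G) (x y : V), h (ρ g x) (ρ g y) = h x y)
    (q : V →ₗ[ℂ] V →ₗ[ℂ] ℂ) (hq : q ≠ 0)
    (hinv : ∀ (g : G) (x y : V), q (ρ g x) (ρ g y) = q x y)
    (hsymm : ∀ x y : V, q x y = q y x) :
    ∃ σ : V → V,
      (∀ a b : V, σ (a + b) = σ a + σ b) ∧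
      (∀ (c : ℂ) (v : V), σ (c • v) = (starRingEnd ℂ) c • σ v) ∧
      (∀ (g : G) (v : V), σ (ρ g v) = ρ g (σ v)) ∧
      Function.Bijective σ ∧
      (∀ v : V, σ (σ v) = v) := by
  let core := hermitianFormCore h hadd₁ hsmul₁ hherm hpos
  let : NormedAddCommGroup V := core.toNormedAddCommGroup
  let : InnerProductSpace ℂ V := .ofCore core.toCore
  set σ := conjLinearMapOfBilin q
  have hσρ (g : G) (v : V) : σ (ρ g v) = ρ g (σ v) :=
    conjLinearMapOfBilin_map q (ρ g) (fun x y => hinvh g y x) (hinv g) v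
  obtain ⟨u, w, huw⟩ : ∃ u v, q u v ≠ 0 := by
    by_contra! hzero
    exact hq (LinearMap.ext₂ hzero)
  have hσw : σ w ≠ 0 := fun hσw =>
    huw (by rw [← inner_conjLinearMapOfBilin, hσw, inner_zero_left])
  have : Nontrivial V := ⟨⟨σ w, 0, hσw⟩⟩
  obtain ⟨μ, hμ⟩ := exists_eq_smul_of_commute_of_irreducible ρ hirr (σ.comp σ)
    fun g x => by simp only [LinearMap.comp_apply, hσρ]
  obtain ⟨c, hc⟩ := exists_involutive_smul_of_comp_self_eq_smul σ
    (pos_of_conjLinearMapOfBilin_comp_self q hsymm hμ hσw) hμ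
  refine ⟨c • σ, map_add (c • σ), map_smulₛₗ (c • σ), fun g v => ?_, hc.bijective, hc⟩
  rw [Pi.smul_apply, Pi.smul_apply, hσρ, map_smul]

/-- If `ρ` is irreducible, `V` admits a `G`-invariant positive-definite
Hermitian form `h` and a nonzero `G`-invariant symmetric bilinear form `q`, then `V`
admits a conjugate-linear `G`-equivariant bijection `σ` with `σ ∘ σ = id`. -/
theorem real_structure_of_symmetric_form
    {G V : Type*} [Group G] [AddCommGroup V] [Module ℂ V]
    [FiniteDimensional ℂ V] [Nontrivial V]
    (ρ : G →* (V ≃ₗ[ℂ] V))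
    (hirr : ∀ p : Submodule ℂ V, (∀ g : G, ∀ x ∈ p, ρ g x ∈ p) → p = ⊥ ∨ p = ⊤)
    (h : V → V → ℂ)
    (hadd₁ : ∀ x y z : V, h (x + y) z = h x z + h y z)
    (hsmul₁ : ∀ (c : ℂ) (x y : V), h (c • x) y = c * h x y)
    (hherm : ∀ x y : V, h y x = (starRingEnd ℂ) (h x y))
    (hpos : ∀ x : V, x ≠ 0 → 0 < (h x x).re)
    (hinvh : ∀ (g : G) (x y : V), h (ρ g x) (ρ g y) = h x y)
    (q : V →ₗ[ℂ] V →ₗ[ℂ] ℂ) (hq : q ≠ 0)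
    (hinv : ∀ (g : G) (x y : V), q (ρ g x) (ρ g y) = q x y)
    (hsymm : ∀ x y : V, q x y = q y x) :
    ∃ σ : V → V,
      (∀ a b : V, σ (a + b) = σ a + σ b) ∧
      (∀ (c : ℂ) (v : V), σ (c • v) = (starRingEnd ℂ) c • σ v) ∧
      (∀ (g : G) (v : V), σ (ρ g v) = ρ g (σ v)) ∧
      Function.Bijective σ ∧
      (∀ v : V, σ (σ v) = v) :=
  real_structure_of_symmetric_form_general ρ hirr h hadd₁ hsmul₁ hherm hpos hinvh q hq hinv hsymm
end

section
/- Suppose ρ is irreducible and σ : V → V is a conjugate-linear G-equivariant bijection with σ∘σ = −id_V. Define Σ : V × V → V × V by Σ(x, y) = (σ(y), −σ(x)), where G acts diagonally on V × V by ρ ⊕ ρ. Then Σ is conjugate-linear, G-equivariant, and satisfies Σ∘Σ = id; the real subspace W = {v ∈ V × V : Σ(v) = v} is invariant under the G-action, satisfies V × V = W ⊕ iW as real vector spaces, and W is irreducible as a real representation of G, i.e. the only G-invariant real subspaces of W are 0 and W. -/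
/-!
Since `σ² = -1`, the fixed space `W` of `Σ` is the graph `{(x, -σ x)}`, so the first projection
identifies `W` with `V` as real representations of `G`, and `V × V = W ⊕ iW` is the splitting
`p = (p + Σ p)/2 + i · (i/2)(Σ p - p)` available for any conjugate-linear involution. It remains
to show that `V` is irreducible over `ℝ`. For a real invariant subspace `s`, both `s ∩ is` and
`s + is` are complex invariant subspaces; in the only case not settled directly, `s ∩ is = 0` and
`s + is = V`, so `s` is a real form of `V` whose conjugation `τ` is `G`-equivariant. Then `στ` is
complex linear and equivariant, hence a scalar `c` by Schur's lemma, and `σ² = |c|² ≥ 0`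
contradicts `σ² = -1`.
-/

/-- The map `Σ(x, y) = (σ y, -σ x)` on `V × V`. -/
def quaternionicDouble {V : Type*} [AddCommGroup V] (σ : V → V) : V × V → V × V :=
  fun p => (σ p.2, -σ p.1)

open Complex Pointwise

section ConjLinear

variable {M : Type*} [AddCommGroup M] [Module ℂ M]

def LinearMap.realFixedSubmodule (J : M →ₗ⋆[ℂ] M) : Submodule ℝ M where
  carrier := {p | J p = p}
  add_mem' {a b} ha hb := by simp_all only [Set.mem_ofPred_eq, map_add]
  zero_mem' := map_zero J
  smul_mem' r p hp := by
    change J p = p at hp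
    change J (r • p) = r • p
    rw [← Complex.coe_smul, map_smulₛₗ, conj_ofReal, hp]

@[simp]
theorem LinearMap.mem_realFixedSubmodule {J : M →ₗ⋆[ℂ] M} {p : M} :
    p ∈ J.realFixedSubmodule ↔ J p = p :=
  Iff.rfl

theorem LinearMap.eq_of_add_I_smul_eq_of_mem_realFixedSubmodule {J : M →ₗ⋆[ℂ] M}
    {a b a' b' : M} (ha : a ∈ J.realFixedSubmodule) (hb : b ∈ J.realFixedSubmodule)
    (ha' : a' ∈ J.realFixedSubmodule) (hb' : b' ∈ J.realFixedSubmodule)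
    (h : a + I • b = a' + I • b') : a = a' ∧ b = b' := by
  rw [mem_realFixedSubmodule] at ha hb ha' hb'
  have hconj : a - I • b = a' - I • b' := by
    simpa [ha, hb, ha', hb', sub_eq_add_neg] using congrArg J h
  have hI : I • b = I • b' := by
    linear_combination (norm := module) (1 / 2 : ℂ) • h - (1 / 2 : ℂ) • hconj
  exact ⟨by linear_combination (norm := module) (1 / 2 : ℂ) • h + (1 / 2 : ℂ) • hconj,
    smul_right_injective M I_ne_zero hI⟩

theorem LinearMap.existsUnique_add_I_smul_of_involutive (J : M →ₗ⋆[ℂ] M)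
    (hJ : ∀ p, J (J p) = p) (p : M) :
    ∃! w : J.realFixedSubmodule × J.realFixedSubmodule, p = (w.1 : M) + I • (w.2 : M) := by
  have ha : (1 / 2 : ℂ) • (p + J p) ∈ J.realFixedSubmodule := by
    simp [hJ, add_comm, map_ofNat]
  have hb : (I / 2) • (J p - p) ∈ J.realFixedSubmodule := by
    simp only [mem_realFixedSubmodule, map_smulₛₗ, map_sub, hJ, map_div₀, conj_I, map_ofNat]
    rw [neg_div, neg_smul, ← smul_neg, neg_sub]
  have hp : p = (1 / 2 : ℂ) • (p + J p) + I • (I / 2) • (J p - p) := by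
    rw [smul_smul, ← mul_div_assoc, I_mul_I]
    module
  refine ⟨(⟨_, ha⟩, ⟨_, hb⟩), hp, ?_⟩
  rintro ⟨⟨a, ha'⟩, ⟨b, hb'⟩⟩ hab
  obtain ⟨rfl, rfl⟩ := eq_of_add_I_smul_eq_of_mem_realFixedSubmodule ha' hb' ha hb (hab ▸ hp)
  rfl

end ConjLinear

section RealSubspace

variable {V : Type*} [AddCommGroup V] [Module ℂ V]

def Submodule.toComplexOfIStable (p : Submodule ℝ V) (hp : ∀ v ∈ p, I • v ∈ p) :
    Submodule ℂ V where
  __ := p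
  smul_mem' c v hv := by
    rw [← re_add_im c, add_smul, mul_smul, Complex.coe_smul, Complex.coe_smul]
    exact p.add_mem (p.smul_mem _ hv) (p.smul_mem _ (hp v hv))

theorem Submodule.toComplexOfIStable_eq_bot_iff {p : Submodule ℝ V}
    {hp : ∀ v ∈ p, I • v ∈ p} : p.toComplexOfIStable hp = ⊥ ↔ p = ⊥ :=
  (restrictScalars_eq_bot_iff ℝ ℂ V).symm

theorem Submodule.toComplexOfIStable_eq_top_iff {p : Submodule ℝ V}
    {hp : ∀ v ∈ p, I • v ∈ p} : p.toComplexOfIStable hp = ⊤ ↔ p = ⊤ :=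
  (restrictScalars_eq_top_iff ℝ ℂ V).symm

theorem Submodule.I_smul_mem_inf_I_smul (s : Submodule ℝ V) :
    ∀ v ∈ s ⊓ I • s, I • v ∈ s ⊓ I • s := by
  rintro v ⟨hv, hv'⟩
  obtain ⟨b, hb, rfl⟩ := (mem_smul_pointwise_iff_exists _ _ _).1 hv'
  refine ⟨?_, smul_mem_pointwise_smul _ _ _ hv⟩
  rw [smul_smul, I_mul_I, neg_one_smul]
  exact s.neg_mem hb

theorem Submodule.I_smul_mem_sup_I_smul (s : Submodule ℝ V) :
    ∀ v ∈ s ⊔ I • s, I • v ∈ s ⊔ I • s := by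
  intro v hv
  obtain ⟨a, ha, _, hb', rfl⟩ := mem_sup.1 hv
  obtain ⟨b, hb, rfl⟩ := (mem_smul_pointwise_iff_exists _ _ _).1 hb'
  rw [smul_add, smul_smul, I_mul_I, neg_one_smul, add_comm]
  exact mem_sup.2 ⟨-b, s.neg_mem hb, I • a, smul_mem_pointwise_smul _ _ _ ha, rfl⟩

theorem Submodule.apply_mem_I_smul {s : Submodule ℝ V} {f : V →ₗ[ℂ] V} (hf : ∀ x ∈ s, f x ∈ s) :
    ∀ x ∈ I • s, f x ∈ I • s := by
  intro x hx
  obtain ⟨b, hb, rfl⟩ := (mem_smul_pointwise_iff_exists _ _ _).1 hx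
  simpa using smul_mem_pointwise_smul _ I _ (hf b hb)

end RealSubspace

section RealForm

variable {V : Type*} [AddCommGroup V] [Module ℂ V] {s : Submodule ℝ V}

theorem Submodule.exists_eq_add_I_smul_of_codisjoint (h : Codisjoint s (I • s)) (v : V) :
    ∃ a ∈ s, ∃ b ∈ s, v = a + I • b := by
  obtain ⟨a, ha, _, hb', rfl⟩ := mem_sup.1 (h.eq_top ▸ mem_top : v ∈ s ⊔ I • s)
  obtain ⟨b, hb, rfl⟩ := (mem_smul_pointwise_iff_exists _ _ _).1 hb'
  exact ⟨a, ha, b, hb, rfl⟩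

theorem Submodule.ofIsCompl_subtype_neg_subtype_add_I_smul (h : IsCompl s (I • s)) {a b : V}
    (ha : a ∈ s) (hb : b ∈ s) :
    LinearMap.ofIsCompl h s.subtype (-(I • s).subtype) (a + I • b) = a - I • b := by
  rw [map_add, LinearMap.ofIsCompl_apply_left h (⟨a, ha⟩ : s),
    LinearMap.ofIsCompl_apply_right h (⟨I • b, smul_mem_pointwise_smul _ _ _ hb⟩ : ↥(I • s))]
  simp [sub_eq_add_neg]

noncomputable def Submodule.conjOfIsCompl (h : IsCompl s (I • s)) : V →ₗ⋆[ℂ] V where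
  toFun := LinearMap.ofIsCompl h s.subtype (-(I • s).subtype)
  map_add' := map_add _
  map_smul' c v := by
    obtain ⟨a, ha, b, hb, rfl⟩ := exists_eq_add_I_smul_of_codisjoint h.codisjoint v
    have hc : c • (a + I • b) = (c.re • a - c.im • b) + I • (c.im • a + c.re • b) := by
      simp only [← Complex.coe_smul]
      match_scalars <;> simp [Complex.ext_iff]
    rw [hc, ofIsCompl_subtype_neg_subtype_add_I_smul h ha hb,
      ofIsCompl_subtype_neg_subtype_add_I_smul h (s.sub_mem (s.smul_mem _ ha) (s.smul_mem _ hb))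
        (s.add_mem (s.smul_mem _ ha) (s.smul_mem _ hb))]
    simp only [← Complex.coe_smul]
    match_scalars <;> simp [Complex.ext_iff]

theorem Submodule.conjOfIsCompl_add_I_smul (h : IsCompl s (I • s)) {a b : V}
    (ha : a ∈ s) (hb : b ∈ s) : conjOfIsCompl h (a + I • b) = a - I • b :=
  ofIsCompl_subtype_neg_subtype_add_I_smul h ha hb

theorem Submodule.conjOfIsCompl_conjOfIsCompl (h : IsCompl s (I • s)) (v : V) :
    conjOfIsCompl h (conjOfIsCompl h v) = v := by
  obtain ⟨a, ha, b, hb, rfl⟩ := exists_eq_add_I_smul_of_codisjoint h.codisjoint v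
  rw [conjOfIsCompl_add_I_smul h ha hb, sub_eq_add_neg, ← smul_neg,
    conjOfIsCompl_add_I_smul h ha (s.neg_mem hb), smul_neg, sub_neg_eq_add]

theorem Submodule.conjOfIsCompl_comm (h : IsCompl s (I • s)) {f : V →ₗ[ℂ] V}
    (hf : ∀ x ∈ s, f x ∈ s) (v : V) : conjOfIsCompl h (f v) = f (conjOfIsCompl h v) := by
  obtain ⟨a, ha, b, hb, rfl⟩ := exists_eq_add_I_smul_of_codisjoint h.codisjoint v
  rw [map_add, map_smul, conjOfIsCompl_add_I_smul h (hf a ha) (hf b hb),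
    conjOfIsCompl_add_I_smul h ha hb, map_sub, map_smul]

end RealForm

section Irreducible

variable {G V : Type*} [Group G] [AddCommGroup V] [Module ℂ V] [FiniteDimensional ℂ V]
  [Nontrivial V] {ρ : G →* (V ≃ₗ[ℂ] V)}

theorem exists_eq_smul_of_equivariant_of_irreducible
    (hirr : ∀ p : Submodule ℂ V, (∀ g : G, ∀ x ∈ p, ρ g x ∈ p) → p = ⊥ ∨ p = ⊤)
    (f : Module.End ℂ V) (hf : ∀ g v, f (ρ g v) = ρ g (f v)) : ∃ c : ℂ, ∀ v, f v = c • v := by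
  obtain ⟨c, hc⟩ := Module.End.exists_eigenvalue f
  have hinv : ∀ g : G, ∀ x ∈ f.eigenspace c, ρ g x ∈ f.eigenspace c := by
    intro g x hx
    rw [Module.End.mem_eigenspace_iff] at hx ⊢
    rw [hf, hx, map_smul]
  refine ⟨c, fun v => Module.End.mem_eigenspace_iff.1 ?_⟩
  rw [(hirr _ hinv).resolve_left (Module.End.hasEigenvalue_iff.1 hc)]
  exact Submodule.mem_top

theorem not_exists_equivariant_conj_involutive_of_sq_eq_neg
    (hirr : ∀ p : Submodule ℂ V, (∀ g : G, ∀ x ∈ p, ρ g x ∈ p) → p = ⊥ ∨ p = ⊤)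
    (σ : V →ₗ⋆[ℂ] V) (hσ : ∀ g v, σ (ρ g v) = ρ g (σ v)) (hσ2 : ∀ v, σ (σ v) = -v) :
    ¬∃ τ : V →ₗ⋆[ℂ] V, (∀ g v, τ (ρ g v) = ρ g (τ v)) ∧ ∀ v, τ (τ v) = v := by
  rintro ⟨τ, hτ, hτ2⟩
  obtain ⟨c, hc⟩ := exists_eq_smul_of_equivariant_of_irreducible hirr (σ.comp τ)
    fun g v => by simp [hτ, hσ]
  obtain ⟨w, hw⟩ := exists_ne (0 : V)
  have hσw : σ w = c • τ w := by simpa [hτ2] using hc (τ w)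
  have hw' : ((normSq c : ℂ) + 1) • w = 0 := by
    have := hσ2 w
    rw [hσw, map_smulₛₗ, ← LinearMap.comp_apply, hc, smul_smul, ← normSq_eq_conj_mul_self] at this
    rw [add_smul, one_smul, this, neg_add_cancel]
  have hpos : (normSq c : ℂ) + 1 ≠ 0 := by
    exact_mod_cast (add_pos_of_nonneg_of_pos (normSq_nonneg c) one_pos).ne'
  exact hw ((smul_eq_zero.1 hw').resolve_left hpos)

theorem realSubmodule_eq_bot_or_eq_top_of_sq_eq_neg
    (hirr : ∀ p : Submodule ℂ V, (∀ g : G, ∀ x ∈ p, ρ g x ∈ p) → p = ⊥ ∨ p = ⊤)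
    (σ : V →ₗ⋆[ℂ] V) (hσ : ∀ g v, σ (ρ g v) = ρ g (σ v)) (hσ2 : ∀ v, σ (σ v) = -v)
    (s : Submodule ℝ V) (hs : ∀ g : G, ∀ x ∈ s, ρ g x ∈ s) : s = ⊥ ∨ s = ⊤ := by
  have hIs (g : G) : ∀ x ∈ I • s, ρ g x ∈ I • s :=
    Submodule.apply_mem_I_smul (f := (ρ g : V →ₗ[ℂ] V)) (hs g)
  have hcore := hirr ((s ⊓ I • s).toComplexOfIStable s.I_smul_mem_inf_I_smul)
    fun g x hx => ⟨hs g x hx.1, hIs g x hx.2⟩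
  have hhull := hirr ((s ⊔ I • s).toComplexOfIStable s.I_smul_mem_sup_I_smul) fun g x hx => by
    obtain ⟨a, ha, b, hb, rfl⟩ := Submodule.mem_sup.1 hx
    rw [map_add]
    exact Submodule.add_mem_sup (hs g a ha) (hIs g b hb)
  simp only [Submodule.toComplexOfIStable_eq_bot_iff, Submodule.toComplexOfIStable_eq_top_iff]
    at hcore hhull
  rcases hcore with hcore | hcore
  · rcases hhull with hhull | hhull
    · exact .inl (eq_bot_iff.2 (hhull ▸ le_sup_left))
    · -- `s` is a real form of `V`, and its conjugation is equivariant
      have h : IsCompl s (I • s) := ⟨disjoint_iff.2 hcore, codisjoint_iff.2 hhull⟩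
      exact absurd ⟨Submodule.conjOfIsCompl h,
          fun g => Submodule.conjOfIsCompl_comm h (f := (ρ g : V →ₗ[ℂ] V)) (hs g),
          Submodule.conjOfIsCompl_conjOfIsCompl h⟩
        (not_exists_equivariant_conj_involutive_of_sq_eq_neg hirr σ hσ hσ2)
  · exact .inr (eq_top_iff.2 (hcore ▸ inf_le_left))

end Irreducible

theorem quaternionicDouble_map {V F : Type*} [AddCommGroup V] [FunLike F V V]
    [AddMonoidHomClass F V V]
    (σ : V → V) (f : F) (hf : ∀ v, σ (f v) = f (σ v)) (p : V × V) :
    quaternionicDouble σ (f p.1, f p.2) =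
      (f (quaternionicDouble σ p).1, f (quaternionicDouble σ p).2) := by
  simp [quaternionicDouble, hf]

section QuaternionicDouble

variable {V : Type*} [AddCommGroup V] [Module ℂ V]

def quaternionicDoubleₛₗ (σ : V →ₗ⋆[ℂ] V) : V × V →ₗ⋆[ℂ] V × V where
  toFun := quaternionicDouble σ
  map_add' a b := by simp [quaternionicDouble, add_comm]
  map_smul' c p := by simp [quaternionicDouble]

theorem quaternionicDouble_quaternionicDouble (σ : V →ₗ⋆[ℂ] V) (hσ2 : ∀ v, σ (σ v) = -v)
    (p : V × V) : quaternionicDouble σ (quaternionicDouble σ p) = p := by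
  simp [quaternionicDouble, hσ2]

theorem quaternionicDouble_eq_self_iff (σ : V →ₗ⋆[ℂ] V) (hσ2 : ∀ v, σ (σ v) = -v)
    {p : V × V} : quaternionicDouble σ p = p ↔ p.2 = -σ p.1 := by
  refine ⟨fun h => (congrArg Prod.snd h).symm, fun h => Prod.ext ?_ h.symm⟩
  simp [quaternionicDouble, h, hσ2]

theorem realFixedSubmodule_quaternionicDouble_eq_bot_or_eq {G : Type*} [Group G]
    [FiniteDimensional ℂ V] [Nontrivial V] {ρ : G →* (V ≃ₗ[ℂ] V)}
    (hirr : ∀ p : Submodule ℂ V, (∀ g : G, ∀ x ∈ p, ρ g x ∈ p) → p = ⊥ ∨ p = ⊤)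
    (σ : V →ₗ⋆[ℂ] V) (hσ : ∀ g v, σ (ρ g v) = ρ g (σ v)) (hσ2 : ∀ v, σ (σ v) = -v)
    (t : Submodule ℝ (V × V)) (ht : t ≤ (quaternionicDoubleₛₗ σ).realFixedSubmodule)
    (hinv : ∀ g : G, ∀ x ∈ t, (ρ g x.1, ρ g x.2) ∈ t) :
    t = ⊥ ∨ t = (quaternionicDoubleₛₗ σ).realFixedSubmodule := by
  have hW {p : V × V} : p ∈ (quaternionicDoubleₛₗ σ).realFixedSubmodule ↔ p.2 = -σ p.1 :=
    quaternionicDouble_eq_self_iff σ hσ2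
  have hfst {p q : V × V} (hp : p ∈ t) (hq : q.2 = -σ q.1) (h : p.1 = q.1) : p = q :=
    Prod.ext h (by rw [hW.1 (ht hp), hq, h])
  have hinvFst (g : G) (x : V) (hx : x ∈ t.map (LinearMap.fst ℝ V V)) :
      ρ g x ∈ t.map (LinearMap.fst ℝ V V) := by
    obtain ⟨q, hq, rfl⟩ := hx
    exact Submodule.mem_map_of_mem (f := LinearMap.fst ℝ V V) (hinv g q hq)
  rcases realSubmodule_eq_bot_or_eq_top_of_sq_eq_neg hirr σ hσ hσ2 _ hinvFst with h | h
  · refine .inl (eq_bot_iff.2 fun p hp => ?_)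
    have hp₁ : p.1 = 0 := by
      simpa [h] using Submodule.mem_map_of_mem (f := LinearMap.fst ℝ V V) hp
    exact hfst hp (by simp) hp₁
  · refine .inr (le_antisymm ht fun p hp => ?_)
    obtain ⟨q, hq, hqp⟩ := h ▸ Submodule.mem_top (x := p.1)
    exact hfst hq (hW.1 hp) hqp ▸ hq

end QuaternionicDouble

theorem quaternionic_double_real_form_general
    {G V : Type*} [Group G] [AddCommGroup V] [Module ℂ V]
    [FiniteDimensional ℂ V] [Nontrivial V]
    (ρ : G →* (V ≃ₗ[ℂ] V))
    (hirr : ∀ p : Submodule ℂ V, (∀ g : G, ∀ x ∈ p, ρ g x ∈ p) → p = ⊥ ∨ p = ⊤)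
    (σ : V → V)
    (hadd : ∀ a b : V, σ (a + b) = σ a + σ b)
    (hsmul : ∀ (c : ℂ) (v : V), σ (c • v) = (starRingEnd ℂ) c • σ v)
    (hequiv : ∀ (g : G) (v : V), σ (ρ g v) = ρ g (σ v))
    (hsq : ∀ v : V, σ (σ v) = -v) :
    (∀ a b : V × V, quaternionicDouble σ (a + b) =
        quaternionicDouble σ a + quaternionicDouble σ b) ∧
    (∀ (c : ℂ) (p : V × V), quaternionicDouble σ (c • p) =
        (starRingEnd ℂ) c • quaternionicDouble σ p) ∧
    (∀ (g : G) (p : V × V), quaternionicDouble σ (ρ g p.1, ρ g p.2) =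
        (ρ g (quaternionicDouble σ p).1, ρ g (quaternionicDouble σ p).2)) ∧
    (∀ p : V × V, quaternionicDouble σ (quaternionicDouble σ p) = p) ∧
    ∃ W : Submodule ℝ (V × V),
      (W : Set (V × V)) = {p : V × V | quaternionicDouble σ p = p} ∧
      (∀ g : G, ∀ p ∈ W, (ρ g p.1, ρ g p.2) ∈ W) ∧
      (∀ p : V × V, ∃! w : W × W, p = (w.1 : V × V) + Complex.I • (w.2 : V × V)) ∧
      (∀ t : Submodule ℝ (V × V), t ≤ W →
        (∀ g : G, ∀ x ∈ t, (ρ g x.1, ρ g x.2) ∈ t) → t = ⊥ ∨ t = W) := by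
  let σₗ : V →ₗ⋆[ℂ] V := { toFun := σ, map_add' := hadd, map_smul' := hsmul }
  have hρ (g : G) := quaternionicDouble_map σ (ρ g) (hequiv g)
  have hinvol := quaternionicDouble_quaternionicDouble σₗ hsq
  refine ⟨map_add (quaternionicDoubleₛₗ σₗ), map_smulₛₗ (quaternionicDoubleₛₗ σₗ), hρ, hinvol,
    (quaternionicDoubleₛₗ σₗ).realFixedSubmodule, rfl, fun g p hp => ?_,
    (quaternionicDoubleₛₗ σₗ).existsUnique_add_I_smul_of_involutive hinvol,
    realFixedSubmodule_quaternionicDouble_eq_bot_or_eq hirr σₗ hequiv hsq⟩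
  exact (hρ g p).trans (congrArg (fun q => (ρ g q.1, ρ g q.2)) hp)

/-- If `ρ` is irreducible and `σ` is a conjugate-linear `G`-equivariant
bijection with `σ ∘ σ = -id`, then `Σ(x,y) = (σ y, -σ x)` on `V × V` (with the diagonal
`G`-action `ρ ⊕ ρ`) is conjugate-linear, `G`-equivariant and satisfies `Σ ∘ Σ = id`;
the real subspace `W = {v | Σ v = v}` is `G`-invariant, `V × V = W ⊕ iW` as real vector
spaces, and `W` is irreducible as a real representation of `G`. -/
theorem quaternionic_double_real_form
    {G V : Type*} [Group G] [AddCommGroup V] [Module ℂ V]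
    [FiniteDimensional ℂ V] [Nontrivial V]
    (ρ : G →* (V ≃ₗ[ℂ] V))
    (hirr : ∀ p : Submodule ℂ V, (∀ g : G, ∀ x ∈ p, ρ g x ∈ p) → p = ⊥ ∨ p = ⊤)
    (σ : V → V)
    (hadd : ∀ a b : V, σ (a + b) = σ a + σ b)
    (hsmul : ∀ (c : ℂ) (v : V), σ (c • v) = (starRingEnd ℂ) c • σ v)
    (hequiv : ∀ (g : G) (v : V), σ (ρ g v) = ρ g (σ v))
    (hbij : Function.Bijective σ)
    (hsq : ∀ v : V, σ (σ v) = -v) :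
    (∀ a b : V × V, quaternionicDouble σ (a + b) =
        quaternionicDouble σ a + quaternionicDouble σ b) ∧
    (∀ (c : ℂ) (p : V × V), quaternionicDouble σ (c • p) =
        (starRingEnd ℂ) c • quaternionicDouble σ p) ∧
    (∀ (g : G) (p : V × V), quaternionicDouble σ (ρ g p.1, ρ g p.2) =
        (ρ g (quaternionicDouble σ p).1, ρ g (quaternionicDouble σ p).2)) ∧
    (∀ p : V × V, quaternionicDouble σ (quaternionicDouble σ p) = p) ∧
    ∃ W : Submodule ℝ (V × V),
      (W : Set (V × V)) = {p : V × V | quaternionicDouble σ p = p} ∧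
      (∀ g : G, ∀ p ∈ W, (ρ g p.1, ρ g p.2) ∈ W) ∧
      (∀ p : V × V, ∃! w : W × W, p = (w.1 : V × V) + Complex.I • (w.2 : V × V)) ∧
      (∀ t : Submodule ℝ (V × V), t ≤ W →
        (∀ g : G, ∀ x ∈ t, (ρ g x.1, ρ g x.2) ∈ t) → t = ⊥ ∨ t = W) :=
  quaternionic_double_real_form_general ρ hirr σ hadd hsmul hequiv hsq
end

section
/- Suppose ρ is irreducible and V admits a G-invariant positive-definite Hermitian form. Then V has a real form (an ℝ-subspace W ⊆ V invariant under all ρ(g) with V = W ⊕ iW as real vector spaces) if and only if V admits a nonzero G-invariant symmetric bilinear form. -/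
/-!
A real form `W` amounts to an antilinear involution `σ` commuting with `ρ`: `W` is its fixed
space and `σ (a + i b) = a - i b`. Given `σ`, the form `(x, y) ↦ ⟪σ x, y⟫ + ⟪σ y, x⟫` is
invariant and symmetric, and it is nonzero because on a fixed vector `w` it equals `2 ‖w‖²`.
Conversely, the invariant inner product writes a symmetric invariant form as
`q x y = ⟪τ x, y⟫` with `τ` antilinear and commuting with `ρ`. Then `τ²` is linear, hence a
scalar `μ` by Schur's lemma, and `‖τ v‖² = conj μ ‖v‖²` forces `μ > 0`, so `μ^(-1/2) τ` is the
involution.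
-/

open Complex ComplexConjugate
open scoped InnerProductSpace

section RealForm

variable {V V' : Type*} [AddCommGroup V] [Module ℂ V] [AddCommGroup V'] [Module ℂ V']

def LinearMap.toConjLinearOfMapISMul (f : V →ₗ[ℝ] V') (hf : ∀ v, f (I • v) = -(I • f v)) :
    V →ₗ⋆[ℂ] V' where
  toFun := f
  map_add' := f.map_add
  map_smul' c v := by
    have hc : c • v = c.re • v + c.im • I • v := by
      rw [← Complex.coe_smul, ← Complex.coe_smul, smul_smul, ← add_smul, re_add_im]
    have hc' : conj c • f v = c.re • f v - c.im • I • f v := by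
      rw [← Complex.coe_smul, ← Complex.coe_smul, smul_smul, ← sub_smul]
      congr 1
      apply Complex.ext <;> simp
    rw [hc, hc', map_add, map_smul, map_smul, hf, smul_neg, ← sub_eq_add_neg]

def realFormMap (W : Submodule ℝ V) : (W × W) →ₗ[ℝ] V :=
  W.subtype.coprod ((I • LinearMap.id : V →ₗ[ℂ] V).restrictScalars ℝ ∘ₗ W.subtype)

theorem realFormMap_apply (W : Submodule ℝ V) (p : W × W) :
    realFormMap W p = p.1 + I • (p.2 : V) :=
  rfl

variable {W : Submodule ℝ V} (hW : ∀ v : V, ∃! p : W × W, v = p.1 + I • (p.2 : V))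
include hW

noncomputable def realFormEquiv : (W × W) ≃ₗ[ℝ] V :=
  LinearEquiv.ofBijective (realFormMap W) <| Function.bijective_iff_existsUnique _ |>.mpr
    fun v => by simpa only [realFormMap_apply, eq_comm] using hW v

theorem realFormEquiv_apply (p : W × W) : realFormEquiv hW p = p.1 + I • (p.2 : V) :=
  rfl

noncomputable def realFormConj : V →ₗ⋆[ℂ] V :=
  LinearMap.toConjLinearOfMapISMul
    (realFormEquiv hW ∘ₗ LinearMap.id.prodMap (-LinearMap.id) ∘ₗ
      (realFormEquiv hW).symm.toLinearMap) <| by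
    intro v
    obtain ⟨⟨a, b⟩, rfl⟩ := (realFormEquiv hW).surjective v
    have hIv : I • realFormEquiv hW (a, b) = realFormEquiv hW (-b, a) := by
      rw [realFormEquiv_apply, realFormEquiv_apply, smul_add, smul_smul, I_mul_I]
      simp only [Submodule.coe_neg]
      module
    rw [hIv]
    simp only [LinearMap.comp_apply, LinearEquiv.coe_coe, LinearEquiv.symm_apply_apply,
      LinearMap.prodMap_apply, LinearMap.id_apply, LinearMap.neg_apply]
    simp only [realFormEquiv_apply, Submodule.coe_neg, smul_add, smul_neg, smul_smul, I_mul_I]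
    module

theorem realFormConj_apply (a b : W) :
    realFormConj hW (realFormEquiv hW (a, b)) = realFormEquiv hW (a, -b) := by
  simp [realFormConj, LinearMap.toConjLinearOfMapISMul]

theorem realFormConj_involutive : Function.Involutive (realFormConj hW) := by
  intro v
  obtain ⟨⟨a, b⟩, rfl⟩ := (realFormEquiv hW).surjective v
  rw [realFormConj_apply, realFormConj_apply, neg_neg]

theorem realFormConj_map {T : V →ₗ[ℂ] V} (hT : ∀ v ∈ W, T v ∈ W) (v : V) :
    realFormConj hW (T v) = T (realFormConj hW v) := by
  obtain ⟨⟨a, b⟩, rfl⟩ := (realFormEquiv hW).surjective v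
  have hTe : ∀ c d : W, T (realFormEquiv hW (c, d)) =
      realFormEquiv hW (⟨T c, hT c c.2⟩, ⟨T d, hT d d.2⟩) := by
    intro c d
    simp only [realFormEquiv_apply, map_add, map_smul]
  rw [hTe, realFormConj_apply, realFormConj_apply, hTe]
  simp only [realFormEquiv_apply, Submodule.coe_neg, map_neg]

omit hW

def fixedSubmodule (σ : V →ₗ⋆[ℂ] V) : Submodule ℝ V where
  carrier := {v | σ v = v}
  add_mem' {a b} ha hb := by simp_all
  zero_mem' := map_zero σ
  smul_mem' r v hv := by
    change σ v = v at hv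
    change σ (r • v) = r • v
    rw [← Complex.coe_smul, map_smulₛₗ, conj_ofReal, hv]

theorem mem_fixedSubmodule {σ : V →ₗ⋆[ℂ] V} {v : V} : v ∈ fixedSubmodule σ ↔ σ v = v :=
  Iff.rfl

theorem existsUnique_add_I_smul_mem_fixedSubmodule {σ : V →ₗ⋆[ℂ] V} (hσ : Function.Involutive σ)
    (v : V) : ∃! p : fixedSubmodule σ × fixedSubmodule σ, v = p.1 + I • (p.2 : V) := by
  have hre : σ ((2⁻¹ : ℂ) • (v + σ v)) = (2⁻¹ : ℂ) • (v + σ v) := by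
    rw [map_smulₛₗ, map_add, hσ v, add_comm, map_inv₀, map_ofNat]
  have him : σ ((2⁻¹ * I) • (σ v - v)) = (2⁻¹ * I) • (σ v - v) := by
    rw [map_smulₛₗ, map_sub, hσ v, map_mul, conj_I]
    simp only [map_inv₀, map_ofNat]
    module
  refine ⟨(⟨_, hre⟩, ⟨_, him⟩), ?_, ?_⟩
  · simp only [smul_smul]
    linear_combination (norm := module) (-2⁻¹ : ℂ) • (I_mul_I • (σ v - v))
  · rintro ⟨⟨a, ha⟩, ⟨b, hb⟩⟩ rfl
    rw [mem_fixedSubmodule] at ha hb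
    have hσv : σ (a + I • b) = a - I • b := by
      rw [map_add, map_smulₛₗ, conj_I, ha, hb, neg_smul, sub_eq_add_neg]
    simp only [hσv, Prod.mk.injEq, Subtype.mk.injEq]
    constructor
    · module
    · linear_combination (norm := module) I_mul_I • b

theorem exists_ne_zero_map_eq_self [Nontrivial V] {σ : V →ₗ⋆[ℂ] V}
    (hσ : Function.Involutive σ) : ∃ w, σ w = w ∧ w ≠ 0 := by
  obtain ⟨v, hv⟩ := exists_ne (0 : V)
  obtain ⟨⟨⟨a, ha⟩, ⟨b, hb⟩⟩, rfl, -⟩ := existsUnique_add_I_smul_mem_fixedSubmodule hσ v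
  by_contra! h
  simp [h a ha, h b hb] at hv

theorem exists_invariant_realForm_iff {ι : Type*} (T : ι → V →ₗ[ℂ] V) :
    (∃ W : Submodule ℝ V, (∀ i, ∀ v ∈ W, T i v ∈ W) ∧
        ∀ v : V, ∃! p : W × W, v = p.1 + I • (p.2 : V)) ↔
      ∃ σ : V →ₗ⋆[ℂ] V, Function.Involutive σ ∧ ∀ i v, σ (T i v) = T i (σ v) := by
  constructor
  · rintro ⟨W, hWT, hW⟩
    exact ⟨realFormConj hW, realFormConj_involutive hW, fun i => realFormConj_map hW (hWT i)⟩
  · rintro ⟨σ, hσ, hσT⟩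
    refine ⟨fixedSubmodule σ, fun i v hv => ?_, existsUnique_add_I_smul_mem_fixedSubmodule hσ⟩
    rw [mem_fixedSubmodule, hσT, mem_fixedSubmodule.mp hv]

theorem involutive_smul_of_comp_self_eq {τ : V →ₗ⋆[ℂ] V} {r : ℝ} (hr : 0 < r)
    (hτ : ∀ v, τ (τ v) = (r : ℂ) • v) :
    Function.Involutive ((((√r)⁻¹ : ℝ) : ℂ) • τ) := by
  intro v
  have hscalar : ((√r)⁻¹ : ℝ) * (√r)⁻¹ * r = 1 := by
    rw [← mul_inv, Real.mul_self_sqrt hr.le, inv_mul_cancel₀ hr.ne']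
  simp only [LinearMap.smul_apply, map_smulₛₗ, conj_ofReal, hτ, smul_smul]
  rw [← ofReal_mul, ← ofReal_mul, ← mul_assoc, hscalar, ofReal_one, one_smul]

end RealForm

theorem Module.End.exists_eq_smul_of_commute {K V ι : Type*} [Field K] [IsAlgClosed K]
    [AddCommGroup V] [Module K V] [FiniteDimensional K V] [Nontrivial V] (T : ι → Module.End K V)
    (hirr : ∀ p : Submodule K V, (∀ i, ∀ x ∈ p, T i x ∈ p) → p = ⊥ ∨ p = ⊤)
    (f : Module.End K V) (hf : ∀ i v, f (T i v) = T i (f v)) : ∃ μ : K, ∀ v, f v = μ • v := by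
  obtain ⟨μ, hμ⟩ := f.exists_eigenvalue
  have hinv : ∀ i, ∀ x ∈ f.eigenspace μ, T i x ∈ f.eigenspace μ := by
    intro i x hx
    rw [Module.End.mem_eigenspace_iff] at hx ⊢
    rw [hf, hx, map_smul]
  rcases hirr _ hinv with hbot | htop
  · exact absurd hbot hμ
  · exact ⟨μ, fun v => Module.End.mem_eigenspace_iff.mp (htop ▸ Submodule.mem_top)⟩

section InnerProduct

variable {E : Type*} [NormedAddCommGroup E] [InnerProductSpace ℂ E]

noncomputable def conjSymmForm (σ : E →ₗ⋆[ℂ] E) : E →ₗ[ℂ] E →ₗ[ℂ] ℂ :=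
  (innerₛₗ ℂ).comp σ + ((innerₛₗ ℂ).comp σ).flip

theorem conjSymmForm_apply (σ : E →ₗ⋆[ℂ] E) (x y : E) :
    conjSymmForm σ x y = ⟪σ x, y⟫_ℂ + ⟪σ y, x⟫_ℂ :=
  rfl

theorem conjSymmForm_comm (σ : E →ₗ⋆[ℂ] E) (x y : E) : conjSymmForm σ x y = conjSymmForm σ y x :=
  add_comm _ _

theorem conjSymmForm_map {σ : E →ₗ⋆[ℂ] E} {T : E →ₗ[ℂ] E}
    (hT : ∀ x y, ⟪T x, T y⟫_ℂ = ⟪x, y⟫_ℂ) (hσT : ∀ v, σ (T v) = T (σ v)) (x y : E) :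
    conjSymmForm σ (T x) (T y) = conjSymmForm σ x y := by
  simp only [conjSymmForm_apply, hσT, hT]

theorem conjSymmForm_ne_zero [Nontrivial E] {σ : E →ₗ⋆[ℂ] E} (hσ : Function.Involutive σ) :
    conjSymmForm σ ≠ 0 := by
  obtain ⟨w, hσw, hw⟩ := exists_ne_zero_map_eq_self hσ
  intro h
  have h2 : (2 : ℂ) * ⟪w, w⟫_ℂ = 0 := by
    rw [two_mul]
    simpa only [conjSymmForm_apply, hσw, LinearMap.zero_apply] using congr($h w w)
  simp [hw] at h2

theorem map_commute_of_inner_eq {q : E →ₗ[ℂ] E →ₗ[ℂ] ℂ} {τ : E →ₗ⋆[ℂ] E}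
    (hτ : ∀ x y, ⟪τ x, y⟫_ℂ = q x y) {T : E ≃ₗ[ℂ] E}
    (hT : ∀ x y, ⟪T x, T y⟫_ℂ = ⟪x, y⟫_ℂ) (hqT : ∀ x y, q (T x) (T y) = q x y) (v : E) :
    τ (T v) = T (τ v) := by
  refine ext_inner_right ℂ fun x => ?_
  calc ⟪τ (T v), x⟫_ℂ = q (T v) (T (T.symm x)) := by rw [hτ, T.apply_symm_apply]
    _ = ⟪T (τ v), T (T.symm x)⟫_ℂ := by rw [hqT, hT, hτ]
    _ = ⟪T (τ v), x⟫_ℂ := by rw [T.apply_symm_apply]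

theorem exists_pos_eq_of_comp_self_eq_smul {τ : E →ₗ⋆[ℂ] E} (hτ : τ ≠ 0)
    (hsymm : ∀ x y, ⟪τ x, y⟫_ℂ = ⟪τ y, x⟫_ℂ) {μ : ℂ} (hμ : ∀ v, τ (τ v) = μ • v) :
    ∃ r : ℝ, 0 < r ∧ μ = r := by
  obtain ⟨v, hv⟩ : ∃ v, τ v ≠ 0 := by
    by_contra! h
    exact hτ (LinearMap.ext h)
  have hv0 : v ≠ 0 := by
    rintro rfl
    simp at hv
  have hnorm : ((‖τ v‖ ^ 2 : ℝ) : ℂ) = conj μ * ((‖v‖ ^ 2 : ℝ) : ℂ) := by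
    have hself : ∀ x : E, ((‖x‖ ^ 2 : ℝ) : ℂ) = ⟪x, x⟫_ℂ := fun x => by simp
    rw [hself, hself, hsymm, hμ, inner_smul_left]
  refine ⟨‖τ v‖ ^ 2 / ‖v‖ ^ 2, by positivity, ?_⟩
  have hconj : conj μ = ((‖τ v‖ ^ 2 / ‖v‖ ^ 2 : ℝ) : ℂ) := by
    rw [ofReal_div, hnorm, mul_div_cancel_right₀ _ (by exact_mod_cast (by positivity))]
  rw [← conj_conj μ, hconj, conj_ofReal]

variable [FiniteDimensional ℂ E]

theorem exists_conjLinear_inner_eq (q : E →ₗ[ℂ] E →ₗ[ℂ] ℂ) :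
    ∃ τ : E →ₗ⋆[ℂ] E, ∀ x y, ⟪τ x, y⟫_ℂ = q x y :=
  ⟨(InnerProductSpace.toDual ℂ E).symm.toLinearEquiv.toLinearMap.comp
      (LinearMap.toContinuousLinearMap.toLinearMap ∘ₗ q),
    fun _ _ => InnerProductSpace.toDual_symm_apply⟩

theorem exists_conj_of_symmetric_form [Nontrivial E] {G : Type*} [Group G]
    (ρ : G →* (E ≃ₗ[ℂ] E))
    (hirr : ∀ p : Submodule ℂ E, (∀ g : G, ∀ x ∈ p, ρ g x ∈ p) → p = ⊥ ∨ p = ⊤)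
    (hρ : ∀ g x y, ⟪ρ g x, ρ g y⟫_ℂ = ⟪x, y⟫_ℂ) (q : E →ₗ[ℂ] E →ₗ[ℂ] ℂ) (hq0 : q ≠ 0)
    (hqρ : ∀ g x y, q (ρ g x) (ρ g y) = q x y) (hqsymm : ∀ x y, q x y = q y x) :
    ∃ σ : E →ₗ⋆[ℂ] E, Function.Involutive σ ∧ ∀ g v, σ (ρ g v) = ρ g (σ v) := by
  obtain ⟨τ, hτ⟩ := exists_conjLinear_inner_eq q
  have hτρ : ∀ g v, τ (ρ g v) = ρ g (τ v) := fun g => map_commute_of_inner_eq hτ (hρ g) (hqρ g)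
  obtain ⟨μ, hμ⟩ := Module.End.exists_eq_smul_of_commute (fun g => (ρ g : Module.End ℂ E)) hirr
    (τ.comp τ) fun g v => by simp [hτρ]
  have hτ0 : τ ≠ 0 := by
    rintro rfl
    exact hq0 <| LinearMap.ext₂ fun x y => by simp [← hτ]
  obtain ⟨r, hr, rfl⟩ := exists_pos_eq_of_comp_self_eq_smul hτ0
    (fun x y => by rw [hτ, hτ, hqsymm]) (μ := μ) hμ
  exact ⟨_, involutive_smul_of_comp_self_eq hr hμ, fun g v => by simp [hτρ]⟩

end InnerProduct

/-- `⟪x, y⟫ = h y x`: `h` is linear in its first argument, Mathlib's inner product in its second. -/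
abbrev InnerProductSpace.Core.ofHermitian {V : Type*} [AddCommGroup V] [Module ℂ V]
    (h : V → V → ℂ)
    (hadd : ∀ x y z : V, h (x + y) z = h x z + h y z)
    (hsmul : ∀ (c : ℂ) (x y : V), h (c • x) y = c * h x y)
    (hherm : ∀ x y : V, h y x = conj (h x y)) (hpos : ∀ x : V, x ≠ 0 → 0 < (h x x).re) :
    InnerProductSpace.Core ℂ V where
  inner x y := h y x
  conj_inner_symm x y := (hherm x y).symm
  re_inner_nonneg x := by
    change 0 ≤ (h x x).re
    rcases eq_or_ne x 0 with rfl | hx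
    · have h00 : h 0 0 = 0 := by simpa using hsmul 0 0 0
      simp [h00]
    · exact (hpos x hx).le
  add_left x y z := by
    change h z (x + y) = h z x + h z y
    rw [hherm, hadd, map_add, ← hherm, ← hherm]
  smul_left x y c := by
    change h y (c • x) = conj c * h y x
    rw [hherm, hsmul, map_mul, ← hherm]
  definite x hx := by
    by_contra hne
    simpa [show h x x = 0 from hx] using hpos x hne

/-- Suppose `ρ` is irreducible and `V` admits a `G`-invariant
positive-definite Hermitian form.  Then `V` has a real form (a `G`-invariant real
subspace `W` with `V = W ⊕ iW` as real vector spaces) iff `V` admits a nonzero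
`G`-invariant symmetric bilinear form. -/
theorem real_form_iff_symmetric_form
    {G V : Type*} [Group G] [AddCommGroup V] [Module ℂ V]
    [FiniteDimensional ℂ V] [Nontrivial V]
    (ρ : G →* (V ≃ₗ[ℂ] V))
    (hirr : ∀ p : Submodule ℂ V, (∀ g : G, ∀ x ∈ p, ρ g x ∈ p) → p = ⊥ ∨ p = ⊤)
    (h : V → V → ℂ)
    (hadd₁ : ∀ x y z : V, h (x + y) z = h x z + h y z)
    (hsmul₁ : ∀ (c : ℂ) (x y : V), h (c • x) y = c * h x y)
    (hherm : ∀ x y : V, h y x = (starRingEnd ℂ) (h x y))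
    (hpos : ∀ x : V, x ≠ 0 → 0 < (h x x).re)
    (hinvh : ∀ (g : G) (x y : V), h (ρ g x) (ρ g y) = h x y) :
    (∃ W : Submodule ℝ V, (∀ g : G, ∀ v ∈ W, ρ g v ∈ W) ∧
        ∀ v : V, ∃! p : W × W, v = (p.1 : V) + Complex.I • (p.2 : V)) ↔
    (∃ q : V →ₗ[ℂ] V →ₗ[ℂ] ℂ, q ≠ 0 ∧
        (∀ (g : G) (x y : V), q (ρ g x) (ρ g y) = q x y) ∧
        (∀ x y : V, q x y = q y x)) := by
  refine (exists_invariant_realForm_iff fun g => (ρ g : V →ₗ[ℂ] V)).trans ?_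
  let core := InnerProductSpace.Core.ofHermitian h hadd₁ hsmul₁ hherm hpos
  let _ : NormedAddCommGroup V := core.toNormedAddCommGroup
  let _ : InnerProductSpace ℂ V := .ofCore core.toCore
  have hρ : ∀ g x y, ⟪ρ g x, ρ g y⟫_ℂ = ⟪x, y⟫_ℂ := fun g x y => hinvh g y x
  constructor
  · rintro ⟨σ, hσ, hσρ⟩
    exact ⟨conjSymmForm σ, conjSymmForm_ne_zero hσ, fun g => conjSymmForm_map (hρ g) (hσρ g),
      conjSymmForm_comm σ⟩
  · rintro ⟨q, hq0, hqρ, hqsymm⟩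
    exact exists_conj_of_symmetric_form ρ hirr hρ q hq0 hqρ hqsymm
end

section
/- Suppose ρ is irreducible and V admits a G-invariant positive-definite Hermitian form. Then V admits a conjugate-linear G-equivariant bijection σ with σ∘σ = −id_V if and only if V admits a nonzero G-invariant alternating bilinear form. -/
/-!
Write `h(x, σ y)` for the bilinear form attached to a conjugate-linear map `σ`; by the Riesz
representation theorem every bilinear form arises this way from exactly one `σ`, and `σ` is
`G`-equivariant exactly when the form is `G`-invariant.

If `σ² = -1`, then `q(x, y) = h(x, σ y) - h(y, σ x)` is alternating by construction and nonzero
because `q(σ y, y) = h(σ y, σ y) + h(y, y)`.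

Conversely, if `q = h(·, σ ·)` is alternating, Schur's lemma makes the linear map `σ²` a scalar
`c`, and `q(x, σ x) = -q(σ x, x)` reads `c̄ h(x, x) = -h(σ x, σ x)`, so `c` is a negative real;
then `σ / √(-c)` squares to `-1`.
-/

theorem exists_apply_eq_smul_of_equivariant {K G V : Type*} [Field K] [IsAlgClosed K] [Monoid G]
    [AddCommGroup V] [Module K V] [FiniteDimensional K V] [Nontrivial V]
    (ρ : G →* (V ≃ₗ[K] V))
    (hirr : ∀ p : Submodule K V, (∀ g : G, ∀ x ∈ p, ρ g x ∈ p) → p = ⊥ ∨ p = ⊤)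
    (A : V →ₗ[K] V) (hA : ∀ (g : G) (v : V), A (ρ g v) = ρ g (A v)) :
    ∃ c : K, ∀ v, A v = c • v := by
  obtain ⟨c, hc⟩ := Module.End.exists_eigenvalue A
  have hinv : ∀ g : G, ∀ x ∈ Module.End.eigenspace A c, ρ g x ∈ Module.End.eigenspace A c := by
    intro g x hx
    rw [Module.End.mem_eigenspace_iff] at hx ⊢
    rw [hA, hx, map_smul]
  have htop : Module.End.eigenspace A c = ⊤ := (hirr _ hinv).resolve_left hc
  exact ⟨c, fun v => Module.End.mem_eigenspace_iff.mp (htop ▸ Submodule.mem_top)⟩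

theorem bijective_of_apply_apply_eq_neg {M : Type*} [InvolutiveNeg M] {f : M → M}
    (hf : ∀ v, f (f v) = -v) : Function.Bijective f := by
  refine ⟨fun a b hab => neg_injective ?_, fun v => ⟨f (-v), by rw [hf, neg_neg]⟩⟩
  rw [← hf, ← hf, hab]

section Hermitian

variable {V : Type*} [AddCommGroup V] [Module ℂ V]

theorem inv_sqrt_smul_apply_apply {σ : V →ₗ⋆[ℂ] V} {r : ℝ} (hr : 0 < r)
    (hσ : ∀ v, σ (σ v) = -((r : ℂ) • v)) (v : V) :
    ((√r : ℂ)⁻¹ • σ) (((√r : ℂ)⁻¹ • σ) v) = -v := by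
  have hsq : (√r : ℂ)⁻¹ * ((√r : ℂ)⁻¹ * r) = 1 := by
    have hs : (√r : ℂ) ≠ 0 := Complex.ofReal_ne_zero.mpr (Real.sqrt_pos.mpr hr).ne'
    field_simp
    exact_mod_cast (Real.sq_sqrt hr.le).symm
  simp only [LinearMap.smul_apply, map_smulₛₗ, hσ, smul_neg, smul_smul, map_inv₀,
    Complex.conj_ofReal, hsq, one_smul]

structure IsHermitianInnerProduct (h : V → V → ℂ) : Prop where
  add_left : ∀ x y z : V, h (x + y) z = h x z + h y z
  smul_left : ∀ (c : ℂ) (x y : V), h (c • x) y = c * h x y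
  conj_symm : ∀ x y : V, h y x = starRingEnd ℂ (h x y)
  re_pos : ∀ x : V, x ≠ 0 → 0 < (h x x).re

namespace IsHermitianInnerProduct

variable {h : V → V → ℂ} (hh : IsHermitianInnerProduct h)
include hh

theorem add_right (x y z : V) : h z (x + y) = h z x + h z y := by
  rw [hh.conj_symm, hh.add_left, map_add, ← hh.conj_symm, ← hh.conj_symm]

theorem smul_right (c : ℂ) (x y : V) : h y (c • x) = starRingEnd ℂ c * h y x := by
  rw [hh.conj_symm, hh.smul_left, map_mul, ← hh.conj_symm]

theorem neg_right (x y : V) : h y (-x) = -h y x := by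
  rw [← neg_one_smul ℂ x, hh.smul_right]
  simp

theorem zero_right (y : V) : h y 0 = 0 := by
  simpa using hh.smul_right 0 0 y

theorem sub_right (x y z : V) : h z (x - y) = h z x - h z y :=
  eq_sub_of_add_eq (by rw [← hh.add_right, sub_add_cancel])

theorem conj_self (x : V) : starRingEnd ℂ (h x x) = h x x :=
  (hh.conj_symm x x).symm

theorem re_self_nonneg (x : V) : 0 ≤ (h x x).re := by
  rcases eq_or_ne x 0 with rfl | hx
  · simp [hh.zero_right]
  · exact (hh.re_pos x hx).le

theorem eq_of_forall_apply_eq {y z : V} (hyz : ∀ x, h x y = h x z) : y = z := by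
  by_contra hne
  have hpos := hh.re_pos (y - z) (sub_ne_zero.mpr hne)
  rw [hh.sub_right, hyz, sub_self, Complex.zero_re] at hpos
  exact lt_irrefl 0 hpos

/-- Mathlib's inner products are conjugate-linear in the first argument, hence the swap. -/
abbrev innerProductSpaceCore : InnerProductSpace.Core ℂ V where
  inner x y := h y x
  conj_inner_symm x y := (hh.conj_symm x y).symm
  re_inner_nonneg x := hh.re_self_nonneg x
  add_left x y z := hh.add_right x y z
  smul_left x y c := hh.smul_right c x y
  definite x hx := by
    by_contra hx0
    have hpos := hh.re_pos x hx0
    rw [show h x x = 0 from hx, Complex.zero_re] at hpos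
    exact lt_irrefl 0 hpos

def toBilin (σ : V →ₗ⋆[ℂ] V) : V →ₗ[ℂ] V →ₗ[ℂ] ℂ :=
  LinearMap.mk₂ ℂ (fun x y => h x (σ y)) (fun x x' y => hh.add_left x x' (σ y))
    (fun c x y => hh.smul_left c x (σ y))
    (fun x y y' => by simp only [map_add, hh.add_right])
    (fun c x y => by simp only [map_smulₛₗ, hh.smul_right, Complex.conj_conj, smul_eq_mul])

@[simp]
theorem toBilin_apply (σ : V →ₗ⋆[ℂ] V) (x y : V) : hh.toBilin σ x y = h x (σ y) := rfl

theorem exists_toBilin_eq [FiniteDimensional ℂ V] (q : V →ₗ[ℂ] V →ₗ[ℂ] ℂ) :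
    ∃ σ : V →ₗ⋆[ℂ] V, hh.toBilin σ = q := by
  let core := hh.innerProductSpaceCore
  let _ : NormedAddCommGroup V := core.toNormedAddCommGroup
  let _ : InnerProductSpace ℂ V := InnerProductSpace.ofCore core.toCore
  have _ : CompleteSpace V := FiniteDimensional.complete ℂ V
  refine ⟨(InnerProductSpace.toDual ℂ V).symm.toLinearEquiv.toLinearMap ∘ₛₗ
    (LinearMap.toContinuousLinearMap.toLinearMap ∘ₗ q.flip), ?_⟩
  ext x y
  exact InnerProductSpace.toDual_symm_apply (𝕜 := ℂ) (E := V)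

theorem exists_pos_eq_neg_of_isAlt {σ : V →ₗ⋆[ℂ] V} (hq : hh.toBilin σ ≠ 0)
    (halt : (hh.toBilin σ).IsAlt) {c : ℂ} (hc : ∀ v, σ (σ v) = c • v) :
    ∃ r : ℝ, 0 < r ∧ c = -r := by
  obtain ⟨x, hx⟩ : ∃ x, σ x ≠ 0 := by
    by_contra! h0
    exact hq (by ext; simp [h0, hh.zero_right])
  have hx0 : x ≠ 0 := by
    rintro rfl
    exact hx (map_zero σ)
  have hskew : h x (c • x) = -h (σ x) (σ x) := by
    simpa [hc] using (halt.neg (σ x) x).symm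
  rw [hh.smul_right] at hskew
  have key : c * h x x = -h (σ x) (σ x) := by
    simpa [hh.conj_self] using congrArg (starRingEnd ℂ) hskew
  refine ⟨(h (σ x) (σ x)).re / (h x x).re, div_pos (hh.re_pos _ hx) (hh.re_pos _ hx0), ?_⟩
  have ha := Complex.conj_eq_iff_re.mp (hh.conj_self x)
  have hb := Complex.conj_eq_iff_re.mp (hh.conj_self (σ x))
  have ha0 : ((h x x).re : ℂ) ≠ 0 := Complex.ofReal_ne_zero.mpr (hh.re_pos _ hx0).ne'
  rw [← ha, ← hb] at key
  push_cast
  field_simp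
  linear_combination key

variable {G : Type*} [Monoid G] {ρ : G →* (V ≃ₗ[ℂ] V)}
  (hρ : ∀ (g : G) (x y : V), h (ρ g x) (ρ g y) = h x y)
include hρ

theorem toBilin_invariant {σ : V →ₗ⋆[ℂ] V} (hσ : ∀ (g : G) (v : V), σ (ρ g v) = ρ g (σ v))
    (g : G) (x y : V) : hh.toBilin σ (ρ g x) (ρ g y) = hh.toBilin σ x y := by
  simp only [toBilin_apply, hσ, hρ]

theorem equivariant_of_toBilin_invariant {σ : V →ₗ⋆[ℂ] V}
    (hq : ∀ (g : G) (x y : V), hh.toBilin σ (ρ g x) (ρ g y) = hh.toBilin σ x y)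
    (g : G) (v : V) : σ (ρ g v) = ρ g (σ v) := by
  refine hh.eq_of_forall_apply_eq fun x => ?_
  obtain ⟨x, rfl⟩ := (ρ g).surjective x
  simpa only [toBilin_apply, hρ] using hq g x v

theorem exists_alternating_of_apply_apply_eq_neg [Nontrivial V] {σ : V →ₗ⋆[ℂ] V}
    (hσρ : ∀ (g : G) (v : V), σ (ρ g v) = ρ g (σ v)) (hσσ : ∀ v, σ (σ v) = -v) :
    ∃ q : V →ₗ[ℂ] V →ₗ[ℂ] ℂ, q ≠ 0 ∧
      (∀ (g : G) (x y : V), q (ρ g x) (ρ g y) = q x y) ∧ ∀ x, q x x = 0 := by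
  refine ⟨hh.toBilin σ - (hh.toBilin σ).flip, fun hq => ?_, fun g x y => ?_, fun x => sub_self _⟩
  · obtain ⟨y, hy⟩ := exists_ne (0 : V)
    have hσy : σ y ≠ 0 := fun h0 => hy (by simpa [h0] using (hσσ y).symm)
    have hqy : (h (σ y) (σ y) + h y y).re = 0 := by
      simpa [hσσ, hh.neg_right] using congrArg (fun q => (q (σ y) y).re) hq
    rw [Complex.add_re] at hqy
    linarith [hh.re_pos _ hσy, hh.re_pos _ hy]
  · simp only [LinearMap.sub_apply, LinearMap.flip_apply, hh.toBilin_invariant hρ hσρ]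

theorem exists_apply_apply_eq_neg_of_alternating [FiniteDimensional ℂ V] [Nontrivial V]
    (hirr : ∀ p : Submodule ℂ V, (∀ g : G, ∀ x ∈ p, ρ g x ∈ p) → p = ⊥ ∨ p = ⊤)
    {q : V →ₗ[ℂ] V →ₗ[ℂ] ℂ} (hq : q ≠ 0) (hqρ : ∀ (g : G) (x y : V), q (ρ g x) (ρ g y) = q x y)
    (hqalt : ∀ x, q x x = 0) :
    ∃ σ : V →ₗ⋆[ℂ] V, (∀ (g : G) (v : V), σ (ρ g v) = ρ g (σ v)) ∧ ∀ v, σ (σ v) = -v := by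
  obtain ⟨σ, rfl⟩ := hh.exists_toBilin_eq q
  have hσρ := hh.equivariant_of_toBilin_invariant hρ hqρ
  obtain ⟨c, hc⟩ := exists_apply_eq_smul_of_equivariant ρ hirr (σ.comp σ) fun g v => by
    simp only [LinearMap.comp_apply, hσρ]
  obtain ⟨r, hr, rfl⟩ := hh.exists_pos_eq_neg_of_isAlt hq hqalt hc
  refine ⟨(√r : ℂ)⁻¹ • σ, fun g v => ?_, inv_sqrt_smul_apply_apply hr fun v => ?_⟩
  · simp only [LinearMap.smul_apply, hσρ, map_smul]
  · simpa [neg_smul] using hc v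

end IsHermitianInnerProduct

end Hermitian

/-- Suppose `ρ` is irreducible and `V` admits a `G`-invariant
positive-definite Hermitian form.  Then `V` admits a conjugate-linear `G`-equivariant
bijection `σ` with `σ ∘ σ = -id` iff `V` admits a nonzero `G`-invariant alternating
bilinear form. -/
theorem quaternionic_structure_iff_alternating_form
    {G V : Type*} [Group G] [AddCommGroup V] [Module ℂ V]
    [FiniteDimensional ℂ V] [Nontrivial V]
    (ρ : G →* (V ≃ₗ[ℂ] V))
    (hirr : ∀ p : Submodule ℂ V, (∀ g : G, ∀ x ∈ p, ρ g x ∈ p) → p = ⊥ ∨ p = ⊤)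
    (h : V → V → ℂ)
    (hadd₁ : ∀ x y z : V, h (x + y) z = h x z + h y z)
    (hsmul₁ : ∀ (c : ℂ) (x y : V), h (c • x) y = c * h x y)
    (hherm : ∀ x y : V, h y x = (starRingEnd ℂ) (h x y))
    (hpos : ∀ x : V, x ≠ 0 → 0 < (h x x).re)
    (hinvh : ∀ (g : G) (x y : V), h (ρ g x) (ρ g y) = h x y) :
    (∃ σ : V → V,
        (∀ a b : V, σ (a + b) = σ a + σ b) ∧
        (∀ (c : ℂ) (v : V), σ (c • v) = (starRingEnd ℂ) c • σ v) ∧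
        (∀ (g : G) (v : V), σ (ρ g v) = ρ g (σ v)) ∧
        Function.Bijective σ ∧
        (∀ v : V, σ (σ v) = -v)) ↔
    (∃ q : V →ₗ[ℂ] V →ₗ[ℂ] ℂ, q ≠ 0 ∧
        (∀ (g : G) (x y : V), q (ρ g x) (ρ g y) = q x y) ∧
        (∀ x : V, q x x = 0)) := by
  have hh : IsHermitianInnerProduct h := ⟨hadd₁, hsmul₁, hherm, hpos⟩
  constructor
  · rintro ⟨σ, hσadd, hσsmul, hσρ, -, hσσ⟩
    exact hh.exists_alternating_of_apply_apply_eq_neg hinvh (σ := ⟨⟨σ, hσadd⟩, hσsmul⟩) hσρ hσσ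
  · rintro ⟨q, hq, hqρ, hqalt⟩
    obtain ⟨σ, hσρ, hσσ⟩ := hh.exists_apply_apply_eq_neg_of_alternating hinvh hirr hq hqρ hqalt
    exact ⟨σ, map_add σ, map_smulₛₗ σ, hσρ, bijective_of_apply_apply_eq_neg hσσ, hσσ⟩
end

section
/- Exactly one of the following holds: (R) V is irreducible as a complex representation of G; (C) there is an irreducible complex subrepresentation U ⊆ V with V = U ⊕ c(U) as an internal direct sum and U not isomorphic to c(U) as complex representations of G; (Q) there is an irreducible complex subrepresentation U ⊆ V with V = U ⊕ c(U) as an internal direct sum, U isomorphic to c(U) as complex representations of G, and U admits a conjugate-linear G-equivariant bijection σ with σ∘σ = −id_U. -/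
open scoped TensorProduct

/-- The complexified representation `ρ_ℂ(g) = id_ℂ ⊗ ρ(g)` on `V = ℂ ⊗[ℝ] W`. -/
noncomputable def rhoC {G W : Type*} [Group G] [AddCommGroup W] [Module ℝ W]
    (ρ : G →* (W ≃ₗ[ℝ] W)) (g : G) : (ℂ ⊗[ℝ] W) →ₗ[ℂ] (ℂ ⊗[ℝ] W) :=
  LinearMap.baseChange ℂ (ρ g).toLinearMap

/-- The conjugation `c` on `V = ℂ ⊗[ℝ] W`, determined by `c (z ⊗ w) = conj z ⊗ w`. -/
noncomputable def conjC (W : Type*) [AddCommGroup W] [Module ℝ W] :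
    (ℂ ⊗[ℝ] W) →ₗ[ℝ] (ℂ ⊗[ℝ] W) :=
  TensorProduct.map Complex.conjAe.toLinearMap LinearMap.id

/-- A complex subspace of `V = ℂ ⊗[ℝ] W` is a subrepresentation if it is invariant
under all `ρ_ℂ(g)`. -/
def IsSubrep {G W : Type*} [Group G] [AddCommGroup W] [Module ℝ W]
    (ρ : G →* (W ≃ₗ[ℝ] W)) (p : Submodule ℂ (ℂ ⊗[ℝ] W)) : Prop :=
  ∀ g : G, ∀ x ∈ p, rhoC ρ g x ∈ p

/-- An irreducible subrepresentation: nonzero, invariant, and with no invariant complex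
subspaces other than `0` and itself. -/
def IsIrredSubrep {G W : Type*} [Group G] [AddCommGroup W] [Module ℝ W]
    (ρ : G →* (W ≃ₗ[ℝ] W)) (U : Submodule ℂ (ℂ ⊗[ℝ] W)) : Prop :=
  U ≠ ⊥ ∧ IsSubrep ρ U ∧
    ∀ p : Submodule ℂ (ℂ ⊗[ℝ] W), p ≤ U → IsSubrep ρ p → p = ⊥ ∨ p = U

/-- `U` and `U'` are isomorphic as complex representations of `G`. -/
def SubrepIso {G W : Type*} [Group G] [AddCommGroup W] [Module ℝ W]
    (ρ : G →* (W ≃ₗ[ℝ] W)) (U U' : Submodule ℂ (ℂ ⊗[ℝ] W)) : Prop :=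
  ∃ e : U ≃ₗ[ℂ] U', ∀ (g : G) (u : U) (hu : rhoC ρ g (u : ℂ ⊗[ℝ] W) ∈ U),
    ((e ⟨rhoC ρ g (u : ℂ ⊗[ℝ] W), hu⟩ : U') : ℂ ⊗[ℝ] W) = rhoC ρ g ((e u : U') : ℂ ⊗[ℝ] W)

/-- Case (R): `V` is irreducible as a complex representation of `G`. -/
def CaseR {G W : Type*} [Group G] [AddCommGroup W] [Module ℝ W]
    (ρ : G →* (W ≃ₗ[ℝ] W)) : Prop :=
  ∀ p : Submodule ℂ (ℂ ⊗[ℝ] W), IsSubrep ρ p → p = ⊥ ∨ p = ⊤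

/-- Case (C): `V = U ⊕ c(U)` with `U` irreducible and `U ≄ c(U)` as `G`-representations. -/
def CaseC {G W : Type*} [Group G] [AddCommGroup W] [Module ℝ W]
    (ρ : G →* (W ≃ₗ[ℝ] W)) : Prop :=
  ∃ U U' : Submodule ℂ (ℂ ⊗[ℝ] W), IsIrredSubrep ρ U ∧
    (U' : Set (ℂ ⊗[ℝ] W)) = conjC W '' (U : Set (ℂ ⊗[ℝ] W)) ∧
    U ⊓ U' = ⊥ ∧ U ⊔ U' = ⊤ ∧ ¬ SubrepIso ρ U U'

/-- Case (Q): `V = U ⊕ c(U)` with `U` irreducible, `U ≅ c(U)` as `G`-representations, and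
`U` carries a conjugate-linear `G`-equivariant bijection `σ` with `σ ∘ σ = -id`. -/
def CaseQ {G W : Type*} [Group G] [AddCommGroup W] [Module ℝ W]
    (ρ : G →* (W ≃ₗ[ℝ] W)) : Prop :=
  ∃ U U' : Submodule ℂ (ℂ ⊗[ℝ] W), IsIrredSubrep ρ U ∧
    (U' : Set (ℂ ⊗[ℝ] W)) = conjC W '' (U : Set (ℂ ⊗[ℝ] W)) ∧
    U ⊓ U' = ⊥ ∧ U ⊔ U' = ⊤ ∧ SubrepIso ρ U U' ∧
    ∃ σ : U → U,
      (∀ a b : U, σ (a + b) = σ a + σ b) ∧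
      (∀ (c : ℂ) (u : U), σ (c • u) = (starRingEnd ℂ) c • σ u) ∧
      Function.Bijective σ ∧
      (∀ (g : G) (u : U) (hu : rhoC ρ g (u : ℂ ⊗[ℝ] W) ∈ U),
        ((σ ⟨rhoC ρ g (u : ℂ ⊗[ℝ] W), hu⟩ : U) : ℂ ⊗[ℝ] W) =
          rhoC ρ g ((σ u : U) : ℂ ⊗[ℝ] W)) ∧
      (∀ u : U, σ (σ u) = -u)

/-!
If `V` is reducible, pick an irreducible subrepresentation `U`. The subspaces `U ⊓ c(U)` and
`U ⊔ c(U)` are `c`-stable, hence complexifications of invariant subspaces of `W`, so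
irreducibility of `W` forces `V = U ⊕ c(U)`. An isomorphism `U ≅ c(U)` followed by `c` is a
conjugate-linear equivariant injection `τ` of `U`, so by Schur's lemma `τ² = λ` with `λ` real and
nonzero. If `λ > 0`, rescaling gives `τ² = 1`, and the graph `{u + c(τ u)}` would be a `c`-stable
invariant subspace that is neither `0` nor `V`; hence `λ < 0`, and rescaling gives `σ² = -1`.
Exclusivity: when `U ≇ c(U)`, projecting onto the two summands shows that every irreducible
subrepresentation of `U ⊕ c(U)` is `U` or `c(U)`.
-/

open scoped ComplexConjugate

section

variable {G W : Type*} [Group G] [AddCommGroup W] [Module ℝ W] {ρ : G →* (W ≃ₗ[ℝ] W)}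
  {U U' : Submodule ℂ (ℂ ⊗[ℝ] W)}

lemma IsIrredSubrep.ne_bot (hU : IsIrredSubrep ρ U) : U ≠ ⊥ := hU.1

lemma IsIrredSubrep.isSubrep (hU : IsIrredSubrep ρ U) : IsSubrep ρ U := hU.2.1

lemma IsIrredSubrep.eq_bot_or_eq (hU : IsIrredSubrep ρ U) (p : Submodule ℂ (ℂ ⊗[ℝ] W))
    (hp : p ≤ U) (hps : IsSubrep ρ p) : p = ⊥ ∨ p = U :=
  hU.2.2 p hp hps

lemma IsSubrep.inf (hU : IsSubrep ρ U) (hU' : IsSubrep ρ U') : IsSubrep ρ (U ⊓ U') :=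
  fun g _ hx => ⟨hU g _ hx.1, hU' g _ hx.2⟩

lemma IsSubrep.sup (hU : IsSubrep ρ U) (hU' : IsSubrep ρ U') : IsSubrep ρ (U ⊔ U') := by
  intro g x hx
  obtain ⟨u, hu, v, hv, rfl⟩ := Submodule.mem_sup.1 hx
  rw [map_add]
  exact Submodule.add_mem_sup (hU g u hu) (hU' g v hv)

lemma conjC_tmul (z : ℂ) (w : W) : conjC W (z ⊗ₜ[ℝ] w) = conj z ⊗ₜ w := rfl

lemma conjC_conjC (x : ℂ ⊗[ℝ] W) : conjC W (conjC W x) = x := by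
  induction x using TensorProduct.induction_on with
  | zero => simp
  | tmul z w => simp [conjC_tmul]
  | add a b ha hb => simp [ha, hb]

lemma conjC_smul (z : ℂ) (x : ℂ ⊗[ℝ] W) : conjC W (z • x) = conj z • conjC W x := by
  induction x using TensorProduct.induction_on with
  | zero => simp
  | tmul z' w => simp [TensorProduct.smul_tmul', conjC_tmul]
  | add a b ha hb => simp [ha, hb]

lemma conjC_rhoC (g : G) (x : ℂ ⊗[ℝ] W) : conjC W (rhoC ρ g x) = rhoC ρ g (conjC W x) := by
  induction x using TensorProduct.induction_on with
  | zero => simp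
  | tmul z w => rfl
  | add a b ha hb => simp [ha, hb]

variable (W) in
noncomputable def conjEquiv : (ℂ ⊗[ℝ] W) ≃ₗ⋆[ℂ] (ℂ ⊗[ℝ] W) where
  toFun := conjC W
  map_add' := map_add _
  map_smul' := conjC_smul
  invFun := conjC W
  left_inv := conjC_conjC
  right_inv := conjC_conjC

@[simp]
lemma conjEquiv_apply (x : ℂ ⊗[ℝ] W) : conjEquiv W x = conjC W x := rfl

noncomputable def conjSubmodule (U : Submodule ℂ (ℂ ⊗[ℝ] W)) : Submodule ℂ (ℂ ⊗[ℝ] W) :=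
  U.map (conjEquiv W : (ℂ ⊗[ℝ] W) →ₗ⋆[ℂ] (ℂ ⊗[ℝ] W))

lemma coe_conjSubmodule : (conjSubmodule U : Set (ℂ ⊗[ℝ] W)) = conjC W '' U := rfl

lemma mem_conjSubmodule {x : ℂ ⊗[ℝ] W} : x ∈ conjSubmodule U ↔ conjC W x ∈ U :=
  Submodule.mem_map_equiv (e := conjEquiv W) U

lemma conjC_mem_conjSubmodule {x : ℂ ⊗[ℝ] W} (hx : x ∈ U) : conjC W x ∈ conjSubmodule U :=
  Submodule.mem_map_of_mem hx

lemma conjSubmodule_conjSubmodule (U : Submodule ℂ (ℂ ⊗[ℝ] W)) :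
    conjSubmodule (conjSubmodule U) = U := by
  ext x
  rw [mem_conjSubmodule, mem_conjSubmodule, conjC_conjC]

lemma conjSubmodule_mono (h : U ≤ U') : conjSubmodule U ≤ conjSubmodule U' :=
  Submodule.map_mono h

lemma conjSubmodule_inf (U U' : Submodule ℂ (ℂ ⊗[ℝ] W)) :
    conjSubmodule (U ⊓ U') = conjSubmodule U ⊓ conjSubmodule U' :=
  Submodule.map_inf _ (conjEquiv W).injective

lemma conjSubmodule_sup (U U' : Submodule ℂ (ℂ ⊗[ℝ] W)) :
    conjSubmodule (U ⊔ U') = conjSubmodule U ⊔ conjSubmodule U' :=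
  Submodule.map_sup _ _ _

lemma conjSubmodule_eq_bot_iff : conjSubmodule U = ⊥ ↔ U = ⊥ :=
  Submodule.map_eq_bot_iff (e := conjEquiv W) (p := U)

lemma IsSubrep.conj (hU : IsSubrep ρ U) : IsSubrep ρ (conjSubmodule U) := by
  intro g x hx
  rw [mem_conjSubmodule, conjC_rhoC] at *
  exact hU g _ hx

lemma IsIrredSubrep.conj (hU : IsIrredSubrep ρ U) : IsIrredSubrep ρ (conjSubmodule U) := by
  refine ⟨conjSubmodule_eq_bot_iff.not.2 hU.ne_bot, hU.isSubrep.conj, fun p hp hps => ?_⟩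
  have hcp := conjSubmodule_mono hp
  rw [conjSubmodule_conjSubmodule] at hcp
  rcases hU.eq_bot_or_eq _ hcp hps.conj with h | h
  · exact .inl (conjSubmodule_eq_bot_iff.1 h)
  · exact .inr (by rw [← h, conjSubmodule_conjSubmodule])

lemma exists_eq_one_tmul_add_I_smul_one_tmul (x : ℂ ⊗[ℝ] W) :
    ∃ a b : W, x = (1 : ℂ) ⊗ₜ[ℝ] a + Complex.I • (1 : ℂ) ⊗ₜ[ℝ] b := by
  induction x using TensorProduct.induction_on with
  | zero => exact ⟨0, 0, by simp⟩
  | tmul z w =>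
    refine ⟨z.re • w, z.im • w, ?_⟩
    simp only [TensorProduct.tmul_smul, TensorProduct.smul_tmul', ← TensorProduct.add_tmul]
    congr 1
    apply Complex.ext <;> simp
  | add x y hx hy =>
    obtain ⟨a, b, rfl⟩ := hx
    obtain ⟨a', b', rfl⟩ := hy
    exact ⟨a + a', b + b', by simp only [TensorProduct.tmul_add, smul_add]; abel⟩

lemma conjC_one_tmul_add_I_smul_one_tmul (a b : W) :
    conjC W ((1 : ℂ) ⊗ₜ[ℝ] a + Complex.I • (1 : ℂ) ⊗ₜ[ℝ] b) =
      (1 : ℂ) ⊗ₜ[ℝ] a - Complex.I • (1 : ℂ) ⊗ₜ[ℝ] b := by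
  simp [conjC_smul, conjC_tmul, sub_eq_add_neg]

noncomputable def realPoints (U : Submodule ℂ (ℂ ⊗[ℝ] W)) : Submodule ℝ W :=
  (U.restrictScalars ℝ).comap (TensorProduct.mk ℝ ℂ W 1)

lemma mem_realPoints {w : W} : w ∈ realPoints U ↔ (1 : ℂ) ⊗ₜ[ℝ] w ∈ U := Iff.rfl

lemma exists_mem_realPoints_of_conjSubmodule_le (hU : conjSubmodule U ≤ U) {x : ℂ ⊗[ℝ] W}
    (hx : x ∈ U) : ∃ a ∈ realPoints U, ∃ b ∈ realPoints U,
      x = (1 : ℂ) ⊗ₜ[ℝ] a + Complex.I • (1 : ℂ) ⊗ₜ[ℝ] b := by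
  obtain ⟨a, b, rfl⟩ := exists_eq_one_tmul_add_I_smul_one_tmul x
  have hcx := hU (conjC_mem_conjSubmodule hx)
  rw [conjC_one_tmul_add_I_smul_one_tmul] at hcx
  refine ⟨a, ?_, b, ?_, rfl⟩ <;> rw [mem_realPoints]
  · convert U.smul_mem (2⁻¹ : ℂ) (U.add_mem hx hcx) using 1
    rw [add_add_sub_cancel, ← two_smul ℂ, smul_smul]
    norm_num
  · convert U.smul_mem (2 * Complex.I)⁻¹ (U.sub_mem hx hcx) using 1
    rw [add_sub_sub_cancel, ← two_smul ℂ, smul_smul, smul_smul]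
    field_simp
    simp

lemma IsSubrep.eq_bot_or_eq_top_of_conjSubmodule_le
    (hirr : ∀ p : Submodule ℝ W, (∀ g : G, ∀ x ∈ p, ρ g x ∈ p) → p = ⊥ ∨ p = ⊤)
    (hU : IsSubrep ρ U) (hc : conjSubmodule U ≤ U) : U = ⊥ ∨ U = ⊤ := by
  rcases hirr (realPoints U) (fun g w hw => hU g _ hw) with h | h
  · refine .inl ((Submodule.eq_bot_iff U).2 fun x hx => ?_)
    obtain ⟨a, ha, b, hb, rfl⟩ := exists_mem_realPoints_of_conjSubmodule_le hc hx
    rw [h, Submodule.mem_bot] at ha hb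
    simp [ha, hb]
  · refine .inr (Submodule.eq_top_iff'.2 fun x => ?_)
    obtain ⟨a, b, rfl⟩ := exists_eq_one_tmul_add_I_smul_one_tmul x
    have hw : ∀ w, (1 : ℂ) ⊗ₜ[ℝ] w ∈ U := fun w => mem_realPoints.1 (h ▸ Submodule.mem_top)
    exact U.add_mem (hw a) (U.smul_mem _ (hw b))

lemma IsIrredSubrep.isCompl_conjSubmodule
    (hirr : ∀ p : Submodule ℝ W, (∀ g : G, ∀ x ∈ p, ρ g x ∈ p) → p = ⊥ ∨ p = ⊤)
    (hU : IsIrredSubrep ρ U) (htop : U ≠ ⊤) : IsCompl U (conjSubmodule U) := by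
  have hinf := (hU.isSubrep.inf hU.isSubrep.conj).eq_bot_or_eq_top_of_conjSubmodule_le hirr
    (by rw [conjSubmodule_inf, conjSubmodule_conjSubmodule, inf_comm])
  have hsup := (hU.isSubrep.sup hU.isSubrep.conj).eq_bot_or_eq_top_of_conjSubmodule_le hirr
    (by rw [conjSubmodule_sup, conjSubmodule_conjSubmodule, sup_comm])
  refine ⟨disjoint_iff.2 (hinf.resolve_right fun h => htop ?_),
    codisjoint_iff.2 (hsup.resolve_left fun h => hU.ne_bot ?_)⟩
  · exact top_le_iff.1 (h ▸ inf_le_left)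
  · exact le_bot_iff.1 (h ▸ le_sup_left)

variable (ρ) in
noncomputable def complexRep : Representation ℂ G (ℂ ⊗[ℝ] W) where
  toFun := rhoC ρ
  map_one' := by ext; simp [rhoC]
  map_mul' g h := by ext; simp [rhoC]

noncomputable def IsSubrep.rep (hU : IsSubrep ρ U) : Representation ℂ G U :=
  Subrepresentation.toRepresentation (ρ := complexRep ρ) ⟨U, fun g _ hx => hU g _ hx⟩

@[simp]
lemma IsSubrep.coe_rep_apply (hU : IsSubrep ρ U) (g : G) (u : U) :
    (hU.rep g u : ℂ ⊗[ℝ] W) = rhoC ρ g u := rfl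

lemma subrepIso_iff (hU : IsSubrep ρ U) (hU' : IsSubrep ρ U') :
    SubrepIso ρ U U' ↔ Nonempty (hU.rep.Equiv hU'.rep) := by
  refine ⟨fun ⟨e, he⟩ => ⟨.mk e fun g => LinearMap.ext fun u => Subtype.ext (he g u _)⟩,
    fun ⟨φ⟩ => ⟨φ.toLinearEquiv, fun g u _ => congrArg Subtype.val
      (Representation.IntertwiningMap.isIntertwining _ _ φ.toIntertwiningMap g u)⟩⟩

lemma SubrepIso.symm (hU : IsSubrep ρ U) (hU' : IsSubrep ρ U') (h : SubrepIso ρ U U') :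
    SubrepIso ρ U' U :=
  have ⟨φ⟩ := (subrepIso_iff hU hU').1 h
  (subrepIso_iff hU' hU).2 ⟨φ.symm⟩

lemma SubrepIso.trans {U'' : Submodule ℂ (ℂ ⊗[ℝ] W)} (hU : IsSubrep ρ U)
    (hU' : IsSubrep ρ U') (hU'' : IsSubrep ρ U'') (h : SubrepIso ρ U U')
    (h' : SubrepIso ρ U' U'') : SubrepIso ρ U U'' :=
  have ⟨φ⟩ := (subrepIso_iff hU hU').1 h
  have ⟨ψ⟩ := (subrepIso_iff hU' hU'').1 h'
  (subrepIso_iff hU hU'').2 ⟨φ.trans ψ⟩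

lemma IsIrredSubrep.isIrreducible (hU : IsIrredSubrep ρ U) :
    hU.isSubrep.rep.IsIrreducible where
  exists_pair_ne := by
    have := Submodule.nontrivial_iff_ne_bot.2 hU.ne_bot
    obtain ⟨u, hu⟩ := exists_ne (0 : U)
    refine ⟨⊥, ⊤, fun h => hu ?_⟩
    have : u ∈ (⊥ : Subrepresentation hU.isSubrep.rep).toSubmodule := by rw [h]; trivial
    exact (Submodule.mem_bot ℂ).1 this
  eq_bot_or_eq_top q := by
    have hq : IsSubrep ρ (q.toSubmodule.map U.subtype) := by
      rintro g _ ⟨u, hu, rfl⟩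
      exact ⟨hU.isSubrep.rep g u, q.apply_mem_toSubmodule g hu, rfl⟩
    have hinj := Submodule.map_injective_of_injective U.injective_subtype
    rcases hU.eq_bot_or_eq _ (Submodule.map_subtype_le U _) hq with h | h
    · exact .inl (Subrepresentation.ext (hinj (h.trans (Submodule.map_bot _).symm)))
    · exact .inr (Subrepresentation.ext (hinj (h.trans (Submodule.map_subtype_top U).symm)))

lemma IsIrredSubrep.exists_eq_smul [FiniteDimensional ℝ W] (hU : IsIrredSubrep ρ U)
    (f : U →ₗ[ℂ] U) (hf : ∀ g u, f (hU.isSubrep.rep g u) = hU.isSubrep.rep g (f u)) :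
    ∃ c : ℂ, ∀ u, f u = c • u := by
  have := hU.isIrreducible
  obtain ⟨c, hc⟩ :=
    Representation.IsIrreducible.algebraMap_intertwiningMap_bijective_of_isAlgClosed.2
      (f.intertwiningMap_of_isIntertwiningMap _ _ hf)
  exact ⟨c, fun u => (DFunLike.congr_fun hc u).symm⟩

lemma IsIrredSubrep.le_ker_or_subrepIso (hU' : IsIrredSubrep ρ U') (hU : IsIrredSubrep ρ U)
    (f : (ℂ ⊗[ℝ] W) →ₗ[ℂ] (ℂ ⊗[ℝ] W)) (hf : ∀ g, Commute f (rhoC ρ g))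
    (hmap : ∀ x ∈ U', f x ∈ U) : U' ≤ LinearMap.ker f ∨ SubrepIso ρ U' U := by
  have := hU'.isIrreducible
  have := hU.isIrreducible
  let F := (f.restrict hmap).intertwiningMap_of_isIntertwiningMap hU'.isSubrep.rep
    hU.isSubrep.rep fun g u => Subtype.ext (LinearMap.congr_fun (hf g).eq u)
  rcases Representation.IsIrreducible.bijective_or_eq_zero F with h | h
  · exact .inr ((subrepIso_iff hU'.isSubrep hU.isSubrep).2 ⟨F.ofBijective h⟩)
  · exact .inl fun x hx => congrArg Subtype.val (DFunLike.congr_fun h (⟨x, hx⟩ : U'))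

lemma IsSubrep.commute_projection (hU : IsSubrep ρ U) (hU' : IsSubrep ρ U') (h : IsCompl U U')
    (g : G) : Commute (U.projection U' h) (rhoC ρ g) := by
  refine (LinearMap.IsIdempotentElem.commute_iff
    (Submodule.isIdempotentElem_projection h)).2 ⟨?_, ?_⟩
  · rw [Submodule.range_projection]
    exact (Module.End.mem_invtSubmodule _).2 (hU g)
  · rw [Submodule.ker_projection]
    exact (Module.End.mem_invtSubmodule _).2 (hU' g)

lemma IsIrredSubrep.eq_or_eq_of_isCompl {U₀ : Submodule ℂ (ℂ ⊗[ℝ] W)}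
    (hU : IsIrredSubrep ρ U) (hU' : IsIrredSubrep ρ U') (h : IsCompl U U')
    (hniso : ¬ SubrepIso ρ U U') (hU₀ : IsIrredSubrep ρ U₀) : U₀ = U ∨ U₀ = U' := by
  have h₁ := hU₀.le_ker_or_subrepIso hU _ (hU.isSubrep.commute_projection hU'.isSubrep h)
    fun x _ => Submodule.projection_apply_mem h x
  have h₂ := hU₀.le_ker_or_subrepIso hU' _
    (hU'.isSubrep.commute_projection hU.isSubrep h.symm)
    fun x _ => Submodule.projection_apply_mem h.symm x
  rw [Submodule.ker_projection] at h₁ h₂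
  rcases h₁ with h₁ | h₁
  · exact .inr ((hU'.eq_bot_or_eq U₀ h₁ hU₀.isSubrep).resolve_left hU₀.ne_bot)
  rcases h₂ with h₂ | h₂
  · exact .inl ((hU.eq_bot_or_eq U₀ h₂ hU₀.isSubrep).resolve_left hU₀.ne_bot)
  exact absurd ((h₁.symm hU₀.isSubrep hU.isSubrep).trans hU.isSubrep hU₀.isSubrep
    hU'.isSubrep h₂) hniso

lemma SubrepIso.exists_conj_intertwiner (hU : IsSubrep ρ U)
    (h : SubrepIso ρ U (conjSubmodule U)) :
    ∃ τ : U →ₗ⋆[ℂ] U, Function.Injective τ ∧ ∀ g u, τ (hU.rep g u) = hU.rep g (τ u) := by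
  obtain ⟨e, he⟩ := h
  let c : conjSubmodule U →ₗ⋆[ℂ] U :=
    (conjEquiv W : (ℂ ⊗[ℝ] W) →ₗ⋆[ℂ] (ℂ ⊗[ℝ] W)).restrict fun _ hx => mem_conjSubmodule.1 hx
  refine ⟨c.comp e.toLinearMap, fun a b hab => e.injective ?_, fun g u => Subtype.ext ?_⟩
  · exact Subtype.ext ((conjEquiv W).injective (congrArg Subtype.val hab))
  · change conjC W (e (hU.rep g u)) = rhoC ρ g (conjC W (e u))
    rw [← conjC_rhoC, ← he g u (hU g u u.2)]
    rfl

lemma IsIrredSubrep.exists_sq_eq_real_smul [FiniteDimensional ℝ W] (hU : IsIrredSubrep ρ U)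
    (τ : U →ₗ⋆[ℂ] U) (hinj : Function.Injective τ)
    (hτ : ∀ g u, τ (hU.isSubrep.rep g u) = hU.isSubrep.rep g (τ u)) :
    ∃ c : ℝ, c ≠ 0 ∧ ∀ u, τ (τ u) = (c : ℂ) • u := by
  obtain ⟨c, hc⟩ := hU.exists_eq_smul (τ.comp τ) fun g u => by simp [hτ]
  have := Submodule.nontrivial_iff_ne_bot.2 hU.ne_bot
  obtain ⟨u, hu⟩ := exists_ne (0 : U)
  have hτu : τ u ≠ 0 := (map_ne_zero_iff τ hinj).2 hu
  -- `τ (τ (τ u))` is both `conj c • τ u` and `c • τ u`.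
  have hreal : conj c = c := by
    have h := congrArg τ (hc u)
    rw [map_smulₛₗ] at h
    exact smul_left_injective ℂ hτu (h.symm.trans (hc (τ u)))
  obtain ⟨r, rfl⟩ := Complex.conj_eq_iff_real.1 hreal
  refine ⟨r, fun hr => hτu (hinj ?_), hc⟩
  simpa [hr] using hc u

lemma inv_sqrt_abs_smul_apply_inv_sqrt_abs_smul {M : Type*} [AddCommGroup M] [Module ℂ M]
    (τ : M →ₗ⋆[ℂ] M) {c : ℝ} (hτ : ∀ u, τ (τ u) = (c : ℂ) • u) (u : M) :
    (((√|c|)⁻¹ : ℝ) : ℂ) • τ ((((√|c|)⁻¹ : ℝ) : ℂ) • τ u) = ((c / |c| : ℝ) : ℂ) • u := by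
  have h : (√|c|)⁻¹ * (√|c|)⁻¹ * c = c / |c| := by
    rw [← mul_inv, Real.mul_self_sqrt (abs_nonneg c), inv_mul_eq_div]
  rw [map_smulₛₗ, hτ, Complex.conj_ofReal, smul_smul, smul_smul, ← h]
  push_cast
  rfl

lemma IsSubrep.eq_bot_of_conj_involution
    (hirr : ∀ p : Submodule ℝ W, (∀ g : G, ∀ x ∈ p, ρ g x ∈ p) → p = ⊥ ∨ p = ⊤)
    (hU : IsSubrep ρ U) (hdisj : U ⊓ conjSubmodule U = ⊥) (τ : U →ₗ⋆[ℂ] U)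
    (hτ : ∀ g u, τ (hU.rep g u) = hU.rep g (τ u)) (hττ : ∀ u, τ (τ u) = u) : U = ⊥ := by
  let γ : U →ₗ[ℂ] ℂ ⊗[ℝ] W :=
    U.subtype + (conjEquiv W : (ℂ ⊗[ℝ] W) →ₗ⋆[ℂ] (ℂ ⊗[ℝ] W)).comp (U.subtype.comp τ)
  have hγ : ∀ u, γ u = u + conjC W (τ u) := fun u => rfl
  have hγ_mem : ∀ u : U, γ u ∈ conjSubmodule U → u = 0 := fun u hu => by
    rw [hγ, Submodule.add_mem_iff_left _ (conjC_mem_conjSubmodule (τ u).2)] at hu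
    simpa [hdisj] using Submodule.mem_inf.2 ⟨u.2, hu⟩
  have hsub : IsSubrep ρ (LinearMap.range γ) := by
    rintro g _ ⟨u, rfl⟩
    exact ⟨hU.rep g u, by simp [hγ, hτ, conjC_rhoC]⟩
  have hconj : conjSubmodule (LinearMap.range γ) ≤ LinearMap.range γ := by
    rintro _ ⟨_, ⟨u, rfl⟩, rfl⟩
    exact ⟨τ u, by simp [hγ, hττ, conjC_conjC, add_comm]⟩
  rcases hsub.eq_bot_or_eq_top_of_conjSubmodule_le hirr hconj with h | h
  · refine (Submodule.eq_bot_iff U).2 fun x hx => ?_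
    have : γ ⟨x, hx⟩ = 0 := (Submodule.mem_bot ℂ).1 (h ▸ LinearMap.mem_range_self γ _)
    exact congrArg Subtype.val (hγ_mem _ (this ▸ (conjSubmodule U).zero_mem))
  · refine conjSubmodule_eq_bot_iff.1 ((Submodule.eq_bot_iff _).2 fun v hv => ?_)
    obtain ⟨u, rfl⟩ : v ∈ LinearMap.range γ := h ▸ Submodule.mem_top
    rw [hγ_mem u hv, map_zero]

lemma IsIrredSubrep.exists_conj_intertwiner_sq_eq_neg [FiniteDimensional ℝ W]
    (hirr : ∀ p : Submodule ℝ W, (∀ g : G, ∀ x ∈ p, ρ g x ∈ p) → p = ⊥ ∨ p = ⊤)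
    (hU : IsIrredSubrep ρ U) (hdisj : U ⊓ conjSubmodule U = ⊥)
    (hiso : SubrepIso ρ U (conjSubmodule U)) :
    ∃ σ : U →ₗ⋆[ℂ] U, (∀ g u, σ (hU.isSubrep.rep g u) = hU.isSubrep.rep g (σ u)) ∧
      ∀ u, σ (σ u) = -u := by
  obtain ⟨τ, hinj, hτ⟩ := hiso.exists_conj_intertwiner hU.isSubrep
  obtain ⟨c, hc0, hc⟩ := hU.exists_sq_eq_real_smul τ hinj hτ
  set σ := (((√|c|)⁻¹ : ℝ) : ℂ) • τ
  have hσ : ∀ g u, σ (hU.isSubrep.rep g u) = hU.isSubrep.rep g (σ u) := by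
    simp [σ, hτ]
  have hσσ : ∀ u, σ (σ u) = ((c / |c| : ℝ) : ℂ) • u :=
    inv_sqrt_abs_smul_apply_inv_sqrt_abs_smul τ hc
  rcases hc0.lt_or_gt with hneg | hpos
  · refine ⟨σ, hσ, fun u => ?_⟩
    rw [hσσ, abs_of_neg hneg, div_neg_self hc0, Complex.ofReal_neg, Complex.ofReal_one]
    exact neg_one_smul ℂ u
  · refine absurd (hU.isSubrep.eq_bot_of_conj_involution hirr hdisj σ hσ fun u => ?_) hU.ne_bot
    rw [hσσ, abs_of_pos hpos, div_self hc0, Complex.ofReal_one, one_smul]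

lemma IsSubrep.exists_isIrredSubrep_le [FiniteDimensional ℝ W] (hU : IsSubrep ρ U)
    (hne : U ≠ ⊥) : ∃ U₀ ≤ U, IsIrredSubrep ρ U₀ := by
  obtain ⟨U₀, ⟨hle, hsub, hne₀⟩, hmin⟩ :=
    wellFounded_lt.has_min {p | p ≤ U ∧ IsSubrep ρ p ∧ p ≠ ⊥} ⟨U, le_rfl, hU, hne⟩
  refine ⟨U₀, hle, hne₀, hsub, fun p hp hps => or_iff_not_imp_left.2 fun hp₀ => ?_⟩
  exact hp.eq_of_not_lt (hmin p ⟨hp.trans hle, hps, hp₀⟩)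

lemma exists_isIrredSubrep_ne_top [FiniteDimensional ℝ W] (hR : ¬ CaseR ρ) :
    ∃ U, IsIrredSubrep ρ U ∧ U ≠ ⊤ := by
  simp only [CaseR, not_forall, not_or] at hR
  obtain ⟨p, hp, hbot, htop⟩ := hR
  obtain ⟨U, hle, hU⟩ := hp.exists_isIrredSubrep_le hbot
  exact ⟨U, hU, fun h => htop (top_le_iff.1 (h ▸ hle))⟩

lemma caseC_or_caseQ [FiniteDimensional ℝ W]
    (hirr : ∀ p : Submodule ℝ W, (∀ g : G, ∀ x ∈ p, ρ g x ∈ p) → p = ⊥ ∨ p = ⊤)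
    (hR : ¬ CaseR ρ) : CaseC ρ ∨ CaseQ ρ := by
  obtain ⟨U, hU, htop⟩ := exists_isIrredSubrep_ne_top hR
  have hc := hU.isCompl_conjSubmodule hirr htop
  by_cases hiso : SubrepIso ρ U (conjSubmodule U)
  · obtain ⟨σ, hσ, hσσ⟩ := hU.exists_conj_intertwiner_sq_eq_neg hirr hc.inf_eq_bot hiso
    have hbij : Function.Bijective σ :=
      Function.bijective_iff_has_inverse.2 ⟨fun u => -σ u, fun u => by simp [hσσ],
        fun u => by simp [hσσ]⟩
    exact .inr ⟨U, _, hU, coe_conjSubmodule, hc.inf_eq_bot, hc.sup_eq_top, hiso, σ, map_add σ,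
      map_smulₛₗ σ, hbij, fun g u _ => congrArg Subtype.val (hσ g u), hσσ⟩
  · exact .inl ⟨U, _, hU, coe_conjSubmodule, hc.inf_eq_bot, hc.sup_eq_top, hiso⟩

lemma not_caseR_of_inf_conjSubmodule_eq_bot (hU : IsIrredSubrep ρ U)
    (hdisj : U ⊓ conjSubmodule U = ⊥) : ¬ CaseR ρ := fun hR => by
  rcases hR U hU.isSubrep with h | rfl
  · exact hU.ne_bot h
  · exact hU.ne_bot (conjSubmodule_eq_bot_iff.1 (by simpa using hdisj))

lemma eq_conjSubmodule_of_coe_eq (h : (U' : Set (ℂ ⊗[ℝ] W)) = conjC W '' U) :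
    U' = conjSubmodule U :=
  SetLike.coe_injective (h.trans coe_conjSubmodule.symm)

lemma CaseC.not_caseR (h : CaseC ρ) : ¬ CaseR ρ :=
  have ⟨_, _, hU, hU', hinf, _⟩ := h
  not_caseR_of_inf_conjSubmodule_eq_bot hU (eq_conjSubmodule_of_coe_eq hU' ▸ hinf)

lemma CaseQ.not_caseR (h : CaseQ ρ) : ¬ CaseR ρ :=
  have ⟨_, _, hU, hU', hinf, _⟩ := h
  not_caseR_of_inf_conjSubmodule_eq_bot hU (eq_conjSubmodule_of_coe_eq hU' ▸ hinf)

lemma CaseC.not_caseQ (hC : CaseC ρ) : ¬ CaseQ ρ := by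
  obtain ⟨U, _, hU, hU', hinf, hsup, hniso⟩ := hC
  rintro ⟨U₀, _, hU₀, hU₀', -, -, hiso, -⟩
  obtain rfl := eq_conjSubmodule_of_coe_eq hU'
  obtain rfl := eq_conjSubmodule_of_coe_eq hU₀'
  rcases hU.eq_or_eq_of_isCompl hU.conj ⟨disjoint_iff.2 hinf, codisjoint_iff.2 hsup⟩ hniso hU₀
    with rfl | rfl
  · exact hniso hiso
  · rw [conjSubmodule_conjSubmodule] at hiso
    exact hniso (hiso.symm hU.conj.isSubrep hU.isSubrep)

end

theorem complexification_trichotomy_general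
    {G W : Type*} [Group G] [AddCommGroup W] [Module ℝ W]
    [FiniteDimensional ℝ W]
    (ρ : G →* (W ≃ₗ[ℝ] W))
    (hirr : ∀ p : Submodule ℝ W, (∀ g : G, ∀ x ∈ p, ρ g x ∈ p) → p = ⊥ ∨ p = ⊤) :
    (CaseR ρ ∧ ¬ CaseC ρ ∧ ¬ CaseQ ρ) ∨
    (¬ CaseR ρ ∧ CaseC ρ ∧ ¬ CaseQ ρ) ∨
    (¬ CaseR ρ ∧ ¬ CaseC ρ ∧ CaseQ ρ) := by
  by_cases hR : CaseR ρ
  · exact .inl ⟨hR, fun h => h.not_caseR hR, fun h => h.not_caseR hR⟩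
  · rcases caseC_or_caseQ hirr hR with h | h
    · exact .inr (.inl ⟨hR, h, h.not_caseQ⟩)
    · exact .inr (.inr ⟨hR, fun h' => h'.not_caseQ h, h⟩)

/-- For a nonzero finite-dimensional irreducible real representation `W` of
`G` admitting an invariant positive-definite symmetric bilinear form, exactly one of the
cases (R), (C), (Q) holds for the complexification `V = ℂ ⊗[ℝ] W`. -/
theorem complexification_trichotomy
    {G W : Type*} [Group G] [AddCommGroup W] [Module ℝ W]
    [FiniteDimensional ℝ W] [Nontrivial W]
    (ρ : G →* (W ≃ₗ[ℝ] W))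
    (hirr : ∀ p : Submodule ℝ W, (∀ g : G, ∀ x ∈ p, ρ g x ∈ p) → p = ⊥ ∨ p = ⊤)
    (b : W →ₗ[ℝ] W →ₗ[ℝ] ℝ)
    (hsymm : ∀ x y : W, b x y = b y x)
    (hpos : ∀ x : W, x ≠ 0 → 0 < b x x)
    (hinv : ∀ (g : G) (x y : W), b (ρ g x) (ρ g y) = b x y) :
    (CaseR ρ ∧ ¬ CaseC ρ ∧ ¬ CaseQ ρ) ∨
    (¬ CaseR ρ ∧ CaseC ρ ∧ ¬ CaseQ ρ) ∨
    (¬ CaseR ρ ∧ ¬ CaseC ρ ∧ CaseQ ρ) :=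
  complexification_trichotomy_general ρ hirr
end
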